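/- arXiv:1902.06339 — 5 statements merged into one kernel-verified Lean document; each statement's English description precedes it below -/
import Mathlib

section
/- Suppose ‖T(t,s)‖ ≤ Me^{λ̄|t−s|+ε|s|} for all t,s, and f satisfies (F3). Then there exists a constant a > 0 (depending only on M, λ̄, ε, η) such that ‖φ(r,n;x) − φ(r,n;y)‖ ≤ ae^{ε|n|}‖x−y‖ for every n ∈ ℤ, every r ∈ [n,n+1] and all x,y ∈ ℝ^d. -/
/- STATEMENT 13: A Lipschitz bound for the solution in its initial condition:
there is a > 0 with ‖φ(r,n;x) − φ(r,n;y)‖ ≤ a e^{ε|n|} ‖x−y‖ for r ∈ [n, n+1]. -/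

noncomputable section

/-- `ℝ^d` -/
abbrev Ed (d : ℕ) := Fin d → ℝ

theorem solution_lipschitz_in_initial_condition (d : ℕ)
    -- the linear equation x' = A(t)x and its evolution family T(t,s)
    (A : ℝ → Ed d →L[ℝ] Ed d) (T : ℝ → ℝ → Ed d →L[ℝ] Ed d)
    (hT_id : ∀ t, T t t = ContinuousLinearMap.id ℝ (Ed d))
    (hT_comp : ∀ t s r, (T t s).comp (T s r) = T t r)
    (hT_deriv : ∀ s x t, HasDerivAt (fun τ => T τ s x) (A t (T t s x)) t)
    (M lamBar eps η : ℝ) (hM : 0 < M) (hlamBar : 0 < lamBar) (heps : 0 ≤ eps)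
    (hη : 0 < η)
    (hgrowth : ∀ t s, ‖T t s‖ ≤ M * Real.exp (lamBar * |t - s| + eps * |s|))
    -- the perturbation f, continuous, C¹ in x with jointly continuous derivative
    (f : ℝ → Ed d → Ed d) (Df : ℝ → Ed d → (Ed d →L[ℝ] Ed d))
    (hf_cont : Continuous (fun p : ℝ × Ed d => f p.1 p.2))
    (hf_diff : ∀ t x, HasFDerivAt (f t) (Df t x) x)
    (hDf_cont : Continuous (fun p : ℝ × Ed d => Df p.1 p.2))
    -- (F3)
    (hF3 : ∀ t x, ‖Df t x‖ ≤ η * Real.exp (-3 * eps * |t|))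
    -- φ(t,t₀;x): the globally defined solution of x' = A(t)x + f(t,x), C¹ in x,
    -- satisfying the variation-of-parameters formula
    (φ : ℝ → ℝ → Ed d → Ed d) (Dφ : ℝ → ℝ → Ed d → (Ed d →L[ℝ] Ed d))
    (hφ_init : ∀ t₀ x, φ t₀ t₀ x = x)
    (hφ_sol : ∀ t₀ x t, HasDerivAt (fun τ => φ τ t₀ x) (A t (φ t t₀ x) + f t (φ t t₀ x)) t)
    (hφ_diff : ∀ t t₀ x, HasFDerivAt (φ t t₀) (Dφ t t₀ x) x)
    (hvop : ∀ t t₀ x, φ t t₀ x = T t t₀ x + ∫ s in t₀..t, T t s (f s (φ s t₀ x))) :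
    -- then there is a constant a > 0 (depending only on M, λ̄, ε, η) with
    -- ‖φ(r,n;x) − φ(r,n;y)‖ ≤ a e^{ε|n|} ‖x−y‖ for r ∈ [n, n+1]
    ∃ a : ℝ, 0 < a ∧
      ∀ (n : ℤ) (rr : ℝ) (x y : Ed d), rr ∈ Set.Icc (n : ℝ) ((n : ℝ) + 1) →
        ‖φ rr (n : ℝ) x - φ rr (n : ℝ) y‖ ≤ a * Real.exp (eps * |(n : ℝ)|) * ‖x - y‖ := by
  have hBpos : 0 < M * Real.exp lamBar := mul_pos hM (Real.exp_pos _)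
  set B : ℝ := M * Real.exp lamBar with hBdef
  have hLpos : 0 < M * η * Real.exp lamBar := mul_pos (mul_pos hM hη) (Real.exp_pos _)
  set L : ℝ := M * η * Real.exp lamBar with hLdef
  refine ⟨B * Real.exp L, mul_pos hBpos (Real.exp_pos _), ?_⟩
  intro n rr x y hrr
  set t0 : ℝ := (n : ℝ) with ht0
  obtain ⟨hrr1, hrr2⟩ := hrr
  -- algebraic facts about T
  have hone : ∀ t, T t t = 1 := fun t => by
    rw [hT_id t, ContinuousLinearMap.one_def]
  have hmul : ∀ a b c : ℝ, T a b * T b c = T a c := fun a b c => by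
    rw [ContinuousLinearMap.mul_def]; exact hT_comp a b c
  -- continuity of s ↦ T s t0
  have hTn_cont : Continuous fun s => T s t0 :=
    continuous_clm_apply.mpr fun v =>
      continuous_iff_continuousAt.mpr fun t => (hT_deriv t0 v t).continuousAt
  -- the units T s t0
  have hU : ∀ s : ℝ, ∃ u : (Ed d →L[ℝ] Ed d)ˣ, (u : Ed d →L[ℝ] Ed d) = T s t0 ∧
      ((u⁻¹ : (Ed d →L[ℝ] Ed d)ˣ) : Ed d →L[ℝ] Ed d) = T t0 s := fun s =>
    ⟨⟨T s t0, T t0 s, by rw [hmul, hone], by rw [hmul, hone]⟩, rfl, rfl⟩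
  -- continuity of s ↦ T t0 s
  have hTinv_cont : Continuous fun s => T t0 s := by
    have hinv : ∀ s : ℝ, Ring.inverse (T s t0) = T t0 s := by
      intro s
      obtain ⟨u, hu1, hu2⟩ := hU s
      rw [← hu1, Ring.inverse_unit, hu2]
    have hcont : Continuous fun s => Ring.inverse (T s t0) := by
      refine continuous_iff_continuousAt.mpr fun s => ?_
      obtain ⟨u, hu1, hu2⟩ := hU s
      have h := NormedRing.inverse_continuousAt u
      rw [hu1] at h
      exact h.comp (f := fun τ : ℝ => T τ t0) hTn_cont.continuousAt
    simpa only [hinv] using hcont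
  -- continuity of s ↦ T r s for any fixed r
  have hTr_cont : ∀ r : ℝ, Continuous fun s => T r s := by
    intro r
    have : (fun s => T r s) = fun s => T r t0 * T t0 s := funext fun s => (hmul r t0 s).symm
    rw [this]
    exact continuous_const.mul hTinv_cont
  -- continuity of solutions
  have hgx_cont : ∀ z : Ed d, Continuous fun s => φ s t0 z := fun z =>
    continuous_iff_continuousAt.mpr fun t => (hφ_sol t0 z t).continuousAt
  have hF_cont : ∀ (r : ℝ) (z : Ed d), Continuous fun s => T r s (f s (φ s t0 z)) := fun r z =>
    (hTr_cont r).clm_apply (hf_cont.comp (continuous_id.prodMk (hgx_cont z)))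
  -- u and its basic properties
  set u : ℝ → ℝ := fun s => ‖φ s t0 x - φ s t0 y‖ with hu
  have hu_cont : Continuous u := ((hgx_cont x).sub (hgx_cont y)).norm
  have hu_nonneg : ∀ s, 0 ≤ u s := fun s => norm_nonneg _
  set c : ℝ := B * Real.exp (eps * |t0|) * ‖x - y‖ with hc
  have hc_nonneg : 0 ≤ c := mul_nonneg (mul_nonneg hBpos.le (Real.exp_pos _).le) (norm_nonneg _)
  -- Lipschitz estimate for f from (F3)
  have hfLip : ∀ (s : ℝ) (a b : Ed d),
      ‖f s a - f s b‖ ≤ η * Real.exp (-3 * eps * |s|) * ‖a - b‖ := fun s a b =>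
    Convex.norm_image_sub_le_of_norm_hasFDerivWithin_le
      (fun z _ => (hf_diff s z).hasFDerivWithinAt) (fun z _ => hF3 s z)
      convex_univ (Set.mem_univ b) (Set.mem_univ a)
  -- bound on the kernel
  have hTbound : ∀ r ∈ Set.Icc t0 (t0 + 1), ∀ s ∈ Set.Icc t0 r,
      ‖T r s‖ * (η * Real.exp (-3 * eps * |s|)) ≤ L := by
    intro r hr s hs
    have habs : |r - s| ≤ 1 := by
      rw [abs_of_nonneg (by linarith [hs.2])]
      linarith [hs.1, hr.2]
    have h2 : ‖T r s‖ ≤ M * Real.exp (lamBar + eps * |s|) := by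
      refine (hgrowth r s).trans ?_
      have : lamBar * |r - s| + eps * |s| ≤ lamBar + eps * |s| := by nlinarith
      exact mul_le_mul_of_nonneg_left (Real.exp_le_exp.mpr this) hM.le
    have hprod : Real.exp (lamBar + eps * |s|) * Real.exp (-3 * eps * |s|)
        = Real.exp lamBar * Real.exp (-(2 * eps * |s|)) := by
      rw [← Real.exp_add, ← Real.exp_add]
      ring_nf
    have hexple : Real.exp (-(2 * eps * |s|)) ≤ 1 := by
      rw [Real.exp_le_one_iff]
      have := abs_nonneg s
      nlinarith
    calc ‖T r s‖ * (η * Real.exp (-3 * eps * |s|))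
        ≤ M * Real.exp (lamBar + eps * |s|) * (η * Real.exp (-3 * eps * |s|)) :=
          mul_le_mul_of_nonneg_right h2 (by positivity)
      _ = M * η * (Real.exp (lamBar + eps * |s|) * Real.exp (-3 * eps * |s|)) := by ring
      _ = L * Real.exp (-(2 * eps * |s|)) := by rw [hprod, hLdef]; ring
      _ ≤ L * 1 := mul_le_mul_of_nonneg_left hexple hLpos.le
      _ = L := mul_one L
  -- the key integral inequality
  have key : ∀ r ∈ Set.Icc t0 (t0 + 1), u r ≤ c + L * ∫ s in t0..r, u s := by
    intro r hr
    have hsplit : φ r t0 x - φ r t0 y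
        = T r t0 (x - y)
          + ∫ s in t0..r, (T r s (f s (φ s t0 x)) - T r s (f s (φ s t0 y))) := by
      rw [hvop r t0 x, hvop r t0 y,
        intervalIntegral.integral_sub ((hF_cont r x).intervalIntegrable _ _)
          ((hF_cont r y).intervalIntegrable _ _), map_sub]
      abel
    have h1 : ‖T r t0 (x - y)‖ ≤ c := by
      have hop := (T r t0).le_opNorm (x - y)
      have hg : ‖T r t0‖ ≤ M * Real.exp (lamBar + eps * |t0|) := by
        refine (hgrowth r t0).trans ?_
        have habs : |r - t0| ≤ 1 := by
          rw [abs_of_nonneg (by linarith [hr.1])]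
          linarith [hr.2]
        have : lamBar * |r - t0| + eps * |t0| ≤ lamBar + eps * |t0| := by nlinarith
        exact mul_le_mul_of_nonneg_left (Real.exp_le_exp.mpr this) hM.le
      calc ‖T r t0 (x - y)‖ ≤ ‖T r t0‖ * ‖x - y‖ := hop
        _ ≤ M * Real.exp (lamBar + eps * |t0|) * ‖x - y‖ :=
            mul_le_mul_of_nonneg_right hg (norm_nonneg _)
        _ = c := by rw [hc, hBdef, Real.exp_add]; ring
    have h2 : ‖∫ s in t0..r, (T r s (f s (φ s t0 x)) - T r s (f s (φ s t0 y)))‖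
        ≤ L * ∫ s in t0..r, u s := by
      have hnorm := intervalIntegral.norm_integral_le_integral_norm
        (μ := MeasureTheory.volume)
        (f := fun s => T r s (f s (φ s t0 x)) - T r s (f s (φ s t0 y))) hr.1
      have hptwise : ∀ s ∈ Set.Icc t0 r,
          ‖T r s (f s (φ s t0 x)) - T r s (f s (φ s t0 y))‖ ≤ L * u s := by
        intro s hs
        calc ‖T r s (f s (φ s t0 x)) - T r s (f s (φ s t0 y))‖
            = ‖T r s (f s (φ s t0 x) - f s (φ s t0 y))‖ := by rw [map_sub]
          _ ≤ ‖T r s‖ * ‖f s (φ s t0 x) - f s (φ s t0 y)‖ := (T r s).le_opNorm _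
          _ ≤ ‖T r s‖ * (η * Real.exp (-3 * eps * |s|) * u s) :=
              mul_le_mul_of_nonneg_left (hfLip s _ _) (norm_nonneg _)
          _ = ‖T r s‖ * (η * Real.exp (-3 * eps * |s|)) * u s := by ring
          _ ≤ L * u s := mul_le_mul_of_nonneg_right (hTbound r hr s hs) (hu_nonneg s)
      have hmono : (∫ s in t0..r, ‖T r s (f s (φ s t0 x)) - T r s (f s (φ s t0 y))‖)
          ≤ ∫ s in t0..r, L * u s :=
        intervalIntegral.integral_mono_on hr.1
          (((hF_cont r x).sub (hF_cont r y)).norm.intervalIntegrable _ _)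
          ((continuous_const.mul hu_cont).intervalIntegrable _ _) hptwise
      have hcm : (∫ s in t0..r, L * u s) = L * ∫ s in t0..r, u s :=
        intervalIntegral.integral_const_mul L u
      calc ‖∫ s in t0..r, (T r s (f s (φ s t0 x)) - T r s (f s (φ s t0 y)))‖
          ≤ ∫ s in t0..r, ‖T r s (f s (φ s t0 x)) - T r s (f s (φ s t0 y))‖ := hnorm
        _ ≤ ∫ s in t0..r, L * u s := hmono
        _ = L * ∫ s in t0..r, u s := hcm
    calc u r = ‖φ r t0 x - φ r t0 y‖ := rfl
      _ = ‖T r t0 (x - y)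
            + ∫ s in t0..r, (T r s (f s (φ s t0 x)) - T r s (f s (φ s t0 y)))‖ := by
          rw [← hsplit]
      _ ≤ ‖T r t0 (x - y)‖
            + ‖∫ s in t0..r, (T r s (f s (φ s t0 x)) - T r s (f s (φ s t0 y)))‖ :=
          norm_add_le _ _
      _ ≤ c + L * ∫ s in t0..r, u s := add_le_add h1 h2
  -- Gronwall
  set w : ℝ → ℝ := fun r => ∫ s in t0..r, u s with hwdef
  have hw_deriv : ∀ r : ℝ, HasDerivAt w (u r) r := fun r =>
    intervalIntegral.integral_hasDerivAt_right (hu_cont.intervalIntegrable _ _)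
      (hu_cont.stronglyMeasurableAtFilter _ _) hu_cont.continuousAt
  have hw_cont : Continuous w := continuous_iff_continuousAt.mpr fun r =>
    (hw_deriv r).continuousAt
  have hw_nonneg : ∀ r, t0 ≤ r → 0 ≤ w r := fun r h =>
    intervalIntegral.integral_nonneg h fun s _ => hu_nonneg s
  have gron : ∀ r ∈ Set.Icc t0 (t0 + 1), ‖w r‖ ≤ gronwallBound 0 L c (r - t0) := by
    refine norm_le_gronwallBound_of_norm_deriv_right_le hw_cont.continuousOn
      (fun r _ => (hw_deriv r).hasDerivWithinAt) ?_ ?_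
    · simp [hwdef, intervalIntegral.integral_same]
    · intro r hr
      have hr' : r ∈ Set.Icc t0 (t0 + 1) := ⟨hr.1, hr.2.le⟩
      rw [Real.norm_of_nonneg (hu_nonneg r), Real.norm_of_nonneg (hw_nonneg r hr.1)]
      have := key r hr'
      linarith
  have hwrr := gron rr ⟨hrr1, hrr2⟩
  rw [Real.norm_of_nonneg (hw_nonneg rr hrr1), gronwallBound_of_K_ne_0 hLpos.ne'] at hwrr
  -- hwrr : w rr ≤ 0 * exp (L * (rr - t0)) + c / L * (exp (L * (rr - t0)) - 1)
  have hurr := key rr ⟨hrr1, hrr2⟩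
  have hE : Real.exp (L * (rr - t0)) ≤ Real.exp L := by
    apply Real.exp_le_exp.mpr
    nlinarith [hLpos]
  have hdiv : L * (c / L) = c := by field_simp
  have hfin : u rr ≤ c * Real.exp L := by
    have h3 : u rr ≤ c * Real.exp (L * (rr - t0)) := by
      have h4 : L * w rr ≤ c * (Real.exp (L * (rr - t0)) - 1) := by
        calc L * w rr ≤ L * (0 * Real.exp (L * (rr - t0))
                + c / L * (Real.exp (L * (rr - t0)) - 1)) :=
              mul_le_mul_of_nonneg_left hwrr hLpos.le
          _ = L * (c / L) * (Real.exp (L * (rr - t0)) - 1) := by ring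
          _ = c * (Real.exp (L * (rr - t0)) - 1) := by rw [hdiv]
      linarith
    calc u rr ≤ c * Real.exp (L * (rr - t0)) := h3
      _ ≤ c * Real.exp L := mul_le_mul_of_nonneg_left hE hc_nonneg
  calc ‖φ rr t0 x - φ rr t0 y‖ = u rr := rfl
    _ ≤ c * Real.exp L := hfin
    _ = B * Real.exp L * Real.exp (eps * |t0|) * ‖x - y‖ := by rw [hc]; ring

end
end

section
/- Suppose ‖T(t,s)‖ ≤ Me^{λ̄|t−s|+ε|s|} for all t,s, and f satisfies (F3) (with η ≤ 1) and (F4). Then there exists a constant d' > 0 such that ‖D_xφ(t,n;x) − D_xφ(t,n;y)‖ ≤ d'‖x−y‖ for every n ∈ ℤ, every t ∈ [n,n+1] and all x,y ∈ ℝ^d. -/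
/-!
Pull everything back to the initial time `a` with the evolution family: for a solution
`φ(τ) = φ(τ,a;p)` the curve `T(a,τ) φ(τ)` has derivative `T(a,τ) f(τ, φ(τ))`, so by Grönwall
the pulled-back difference of two solutions grows at most like `exp (K (τ - a))`, where `K` bounds
`‖T(a,s)‖ ‖D_x f(s,·)‖ ‖T(s,a)‖`. On `[a, a + 1]` this `K` does not depend on `a`: the weights
`exp (ε|s|)` and `exp (ε|a|)` coming from the growth of `T` are absorbed by the decay
`exp (-3ε|s|)` in (F3). Hence `φ(τ,a;·)` is Lipschitz and `D_xφ` is bounded; the same estimate for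
the difference at two times shows that `τ ↦ T(a,τ) D_xφ(τ,a;x)` is Lipschitz, which makes the
variation-of-parameters integrand continuous. Subtracting the variation-of-parameters formulas for
`x` and `y` and using (F4), whose decay `exp (-4ε|s|)` again absorbs all the weights, gives
`‖Δ r‖ ≤ c ‖x - y‖ + P ∫ₐʳ ‖Δ‖` for `Δ r = D_xφ(r,a;x) - D_xφ(r,a;y)`, with constants independent
of `a`; the integral form of Grönwall's inequality concludes.
-/

noncomputable section

open Set Filter Topology Real

theorem abs_le_abs_add_one_of_mem_Icc {a s : ℝ} (hs : s ∈ Icc a (a + 1)) : |a| ≤ |s| + 1 := by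
  have := abs_sub_abs_le_abs_sub a s
  rw [abs_sub_comm, abs_of_nonneg (sub_nonneg.2 hs.1)] at this
  linarith [hs.2]

theorem abs_sub_le_one_of_mem_Icc {a r s : ℝ} (hr : r ∈ Icc a (a + 1)) (hs : s ∈ Icc a (a + 1)) :
    |r - s| ≤ 1 := by
  simpa [Real.dist_eq] using Real.dist_le_of_mem_Icc hr hs

theorem add_mul_gronwallBound_zero (c L x : ℝ) :
    c + L * gronwallBound 0 L c x = c * exp (L * x) := by
  rcases eq_or_ne L 0 with rfl | hL
  · simp
  · rw [gronwallBound_of_K_ne_0 hL]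
    field_simp
    ring

theorem le_mul_exp_of_le_add_mul_integral {g : ℝ → ℝ} {a b c L : ℝ} (hL : 0 ≤ L)
    (hg : ContinuousOn g (Icc a b)) (h : ∀ r ∈ Icc a b, g r ≤ c + L * ∫ s in a..r, g s) :
    ∀ r ∈ Icc a b, g r ≤ c * exp (L * (r - a)) := by
  intro r hr
  have hab : a ≤ b := hr.1.trans hr.2
  set G := IccExtend hab ((Icc a b).domRestrict g)
  have hG : Continuous G := (continuousOn_iff_continuous_domRestrict.1 hg).Icc_extend'
  have hGg : ∀ s ∈ Icc a b, G s = g s := fun s hs => IccExtend_of_mem hab _ hs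
  have hint : ∀ r ∈ Icc a b, ∫ s in a..r, g s = ∫ s in a..r, G s := fun r hr =>
    intervalIntegral.integral_congr fun s hs =>
      (hGg s (uIcc_subset_Icc (left_mem_Icc.2 hab) hr hs)).symm
  have hprim : ∫ s in a..r, G s ≤ gronwallBound 0 L c (r - a) := by
    refine le_gronwallBound_of_liminf_deriv_right_le (f := fun r => ∫ s in a..r, G s) (f' := G)
      (b := b) (intervalIntegral.continuous_primitive (fun _ _ => hG.intervalIntegrable _ _) a
      ).continuousOn ?_ (by simp) ?_ r hr
    · exact fun x _ _ hr => ((hG.integral_hasStrictDerivAt a x).hasDerivAt.hasDerivWithinAt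
        ).liminf_right_slope_le hr
    · intro x hx
      rw [hGg x (Ico_subset_Icc_self hx), ← hint x (Ico_subset_Icc_self hx), add_comm]
      exact h x (Ico_subset_Icc_self hx)
  calc g r ≤ c + L * ∫ s in a..r, G s := hint r hr ▸ h r hr
    _ ≤ c + L * gronwallBound 0 L c (r - a) := by gcongr
    _ = c * exp (L * (r - a)) := add_mul_gronwallBound_zero c L _

theorem ContinuousLinearMap.norm_comp_comp_sub_comp_comp_le {E F G H : Type*}
    [SeminormedAddCommGroup E] [SeminormedAddCommGroup F] [SeminormedAddCommGroup G]
    [SeminormedAddCommGroup H] [NormedSpace ℝ E] [NormedSpace ℝ F] [NormedSpace ℝ G]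
    [NormedSpace ℝ H] (L : G →L[ℝ] H) (Q Q' : F →L[ℝ] G) (R R' : E →L[ℝ] F) :
    ‖L.comp (Q.comp R) - L.comp (Q'.comp R')‖ ≤ ‖L‖ * (‖Q‖ * ‖R - R'‖ + ‖Q - Q'‖ * ‖R'‖) := by
  have hsplit : L.comp (Q.comp R) - L.comp (Q'.comp R') =
      L.comp (Q.comp (R - R') + (Q - Q').comp R') := by
    simp only [comp_sub, sub_comp, comp_add]; abel
  rw [hsplit]
  refine (opNorm_comp_le _ _).trans (mul_le_mul_of_nonneg_left ?_ (norm_nonneg _))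
  exact (norm_add_le _ _).trans (add_le_add (opNorm_comp_le _ _) (opNorm_comp_le _ _))

theorem hasDerivAt_clm_of_forall_apply {E F : Type*} [NormedAddCommGroup E] [NormedSpace ℝ E]
    [NormedAddCommGroup F] [NormedSpace ℝ F] [FiniteDimensional ℝ E]
    {u : ℝ → E →L[ℝ] F} {u' : E →L[ℝ] F} {t : ℝ}
    (h : ∀ y, HasDerivAt (fun τ => u τ y) (u' y) t) : HasDerivAt u u' t := by
  let e : (E →L[ℝ] F) ≃L[ℝ] Fin (Module.finrank ℝ E) → F :=
    ((ContinuousLinearEquiv.ofFinrankEq (Module.finrank_fin_fun ℝ).symm).arrowCongr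
      (1 : F ≃L[ℝ] F)).trans (ContinuousLinearEquiv.piRing _)
  have he : HasDerivAt (fun τ => e (u τ)) (e u') t := hasDerivAt_pi.2 fun i => h _
  simpa [Function.comp_def] using e.symm.hasFDerivAt.comp_hasDerivAt t he

variable {E : Type*} [NormedAddCommGroup E] [NormedSpace ℝ E]

structure IsEvolutionFamily (A : ℝ → E →L[ℝ] E) (T : ℝ → ℝ → E →L[ℝ] E) : Prop where
  self_eq_id : ∀ t, T t t = ContinuousLinearMap.id ℝ E
  comp_eq : ∀ t s r, (T t s).comp (T s r) = T t r
  hasDerivAt_apply : ∀ s x t, HasDerivAt (fun τ => T τ s x) (A t (T t s x)) t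

def PullbackLipschitzOn (T : ℝ → ℝ → E →L[ℝ] E) (f : ℝ → E → E) (a K : ℝ) (I : Set ℝ) :
    Prop :=
  ∀ s ∈ I, ∀ p q, ‖T a s (f s p - f s q)‖ ≤ K * ‖T a s (p - q)‖

namespace IsEvolutionFamily

variable {A : ℝ → E →L[ℝ] E} {T : ℝ → ℝ → E →L[ℝ] E}

theorem mul_swap (hT : IsEvolutionFamily A T) (t s : ℝ) : T t s * T s t = 1 := by
  rw [ContinuousLinearMap.mul_def, hT.comp_eq, hT.self_eq_id, ContinuousLinearMap.one_def]

theorem apply_swap (hT : IsEvolutionFamily A T) (t s : ℝ) (x : E) : T t s (T s t x) = x := by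
  rw [← mul_apply_eq_comp, hT.mul_swap, one_apply_eq_self]

def toUnits (hT : IsEvolutionFamily A T) (t s : ℝ) : (E →L[ℝ] E)ˣ :=
  ⟨T t s, T s t, hT.mul_swap t s, hT.mul_swap s t⟩

theorem pullbackLipschitzOn_of_decay (hT : IsEvolutionFamily A T) {f : ℝ → E → E} {P ε η : ℝ}
    (hP : ∀ r s, |r - s| ≤ 1 → ‖T r s‖ ≤ P * exp (ε * |s|)) (hP0 : 0 ≤ P) (hε : 0 ≤ ε)
    (hη : 0 ≤ η) (hη1 : η ≤ 1) (hf : ∀ s p q, ‖f s p - f s q‖ ≤ η * exp (-3 * ε * |s|) * ‖p - q‖)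
    (a : ℝ) : PullbackLipschitzOn T f a (P ^ 2 * exp ε) (Icc a (a + 1)) := by
  intro s hs p q
  have ha : a ∈ Icc a (a + 1) := ⟨le_rfl, by linarith⟩
  have hsa : ‖p - q‖ ≤ P * exp (ε * |a|) * ‖T a s (p - q)‖ :=
    calc ‖p - q‖ = ‖T s a (T a s (p - q))‖ := by rw [hT.apply_swap]
      _ ≤ P * exp (ε * |a|) * ‖T a s (p - q)‖ :=
        (T s a).le_of_opNorm_le (hP s a (abs_sub_le_one_of_mem_Icc hs ha)) _
  have hexp : ε * |s| + -3 * ε * |s| + ε * |a| ≤ ε := by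
    nlinarith [abs_le_abs_add_one_of_mem_Icc hs, abs_nonneg s]
  calc ‖T a s (f s p - f s q)‖
      ≤ P * exp (ε * |s|) * (η * exp (-3 * ε * |s|) * (P * exp (ε * |a|) * ‖T a s (p - q)‖)) :=
        ((T a s).le_of_opNorm_le (hP a s (abs_sub_le_one_of_mem_Icc ha hs)) _).trans
          (by gcongr; exact (hf s p q).trans (by gcongr))
    _ = P ^ 2 * η * exp (ε * |s| + -3 * ε * |s| + ε * |a|) * ‖T a s (p - q)‖ := by
        rw [exp_add, exp_add]; ring
    _ ≤ P ^ 2 * 1 * exp ε * ‖T a s (p - q)‖ := by gcongr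
    _ = P ^ 2 * exp ε * ‖T a s (p - q)‖ := by ring

variable [FiniteDimensional ℝ E]

theorem hasDerivAt_left (hT : IsEvolutionFamily A T) (s t : ℝ) :
    HasDerivAt (fun τ => T τ s) ((A t).comp (T t s)) t :=
  hasDerivAt_clm_of_forall_apply fun x => hT.hasDerivAt_apply s x t

theorem hasDerivAt_right (hT : IsEvolutionFamily A T) (s t : ℝ) :
    HasDerivAt (fun τ => T s τ) (-(T s t * A t)) t := by
  have hinv : (fun τ => T s τ) = fun τ => Ring.inverse (T τ s) :=
    funext fun τ => (Ring.inverse_unit (hT.toUnits τ s)).symm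
  rw [hinv]
  refine ((hasFDerivAt_ringInverse (hT.toUnits t s)).comp_hasDerivAt t
    (hT.hasDerivAt_left s t)).congr_deriv ?_
  change -(T s t * ((A t).comp (T t s)) * T s t) = _
  rw [← ContinuousLinearMap.mul_def, mul_assoc, mul_assoc, hT.mul_swap, mul_one]

theorem continuous_left (hT : IsEvolutionFamily A T) (s : ℝ) : Continuous fun τ => T τ s :=
  continuous_iff_continuousAt.2 fun t => (hT.hasDerivAt_left s t).continuousAt

theorem continuous_right (hT : IsEvolutionFamily A T) (s : ℝ) : Continuous fun τ => T s τ :=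
  continuous_iff_continuousAt.2 fun t => (hT.hasDerivAt_right s t).continuousAt

theorem hasDerivAt_apply_right_of_hasDerivAt (hT : IsEvolutionFamily A T) {y : ℝ → E} {g : E}
    {s t : ℝ} (hy : HasDerivAt y (A t (y t) + g) t) :
    HasDerivAt (fun τ => T s τ (y τ)) (T s t g) t := by
  convert (hT.hasDerivAt_right s t).clm_apply hy using 1
  simp only [neg_apply, mul_apply_eq_comp, map_add]
  abel

end IsEvolutionFamily

structure IsSolutionFlow (A : ℝ → E →L[ℝ] E) (f : ℝ → E → E) (φ : ℝ → ℝ → E → E) : Prop where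
  apply_self : ∀ t₀ x, φ t₀ t₀ x = x
  hasDerivAt : ∀ t₀ x t, HasDerivAt (fun τ => φ τ t₀ x) (A t (φ t t₀ x) + f t (φ t t₀ x)) t

namespace IsSolutionFlow

variable {A : ℝ → E →L[ℝ] E} {T : ℝ → ℝ → E →L[ℝ] E} {f : ℝ → E → E} {φ : ℝ → ℝ → E → E}
  {Dφ : ℝ → ℝ → E → E →L[ℝ] E} {Df : ℝ → E → E →L[ℝ] E}

theorem continuous (hφ : IsSolutionFlow A f φ) (t₀ : ℝ) (x : E) : Continuous fun τ => φ τ t₀ x :=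
  continuous_iff_continuousAt.2 fun t => (hφ.hasDerivAt t₀ x t).continuousAt

variable [FiniteDimensional ℝ E]

theorem hasDerivAt_pullback_sub (hφ : IsSolutionFlow A f φ)
    (hT : IsEvolutionFamily A T) (a : ℝ) (p q : E) (t : ℝ) :
    HasDerivAt (fun τ => T a τ (φ τ a p - φ τ a q)) (T a t (f t (φ t a p) - f t (φ t a q))) t :=
  hT.hasDerivAt_apply_right_of_hasDerivAt <|
    ((hφ.hasDerivAt a p t).sub (hφ.hasDerivAt a q t)).congr_deriv (by rw [map_sub]; abel)

variable {a b K : ℝ}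

theorem norm_pullback_sub_le (hφ : IsSolutionFlow A f φ)
    (hT : IsEvolutionFamily A T)
    (hK : PullbackLipschitzOn T f a K (Icc a b)) (p q : E) :
    ∀ τ ∈ Icc a b, ‖T a τ (φ τ a p - φ τ a q)‖ ≤ ‖p - q‖ * exp (K * (τ - a)) := by
  intro τ hτ
  have hu := hφ.hasDerivAt_pullback_sub hT a p q
  refine (norm_le_gronwallBound_of_norm_deriv_right_le
    (fun t _ => (hu t).continuousAt.continuousWithinAt) (fun t _ => (hu t).hasDerivWithinAt)
    ?_ (fun t ht => by rw [add_zero]; exact hK t (Ico_subset_Icc_self ht) _ _) τ hτ).trans_eq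
    (gronwallBound_ε0 _ _ _)
  rw [hT.self_eq_id, hφ.apply_self, hφ.apply_self, ContinuousLinearMap.id_apply]

theorem norm_pullback_sub_sub_le (hφ : IsSolutionFlow A f φ)
    (hT : IsEvolutionFamily A T) (hK0 : 0 ≤ K)
    (hK : PullbackLipschitzOn T f a K (Icc a b)) (p q : E) :
    ∀ t₁ ∈ Icc a b, ∀ t₂ ∈ Icc a b,
      ‖T a t₁ (φ t₁ a p - φ t₁ a q) - T a t₂ (φ t₂ a p - φ t₂ a q)‖ ≤
        K * exp (K * (b - a)) * ‖p - q‖ * |t₁ - t₂| := by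
  intro t₁ ht₁ t₂ ht₂
  have hderiv : ∀ s ∈ Icc a b,
      ‖T a s (f s (φ s a p) - f s (φ s a q))‖ ≤ K * exp (K * (b - a)) * ‖p - q‖ := by
    intro s hs
    calc ‖T a s (f s (φ s a p) - f s (φ s a q))‖ ≤ K * ‖T a s (φ s a p - φ s a q)‖ :=
          hK s hs _ _
      _ ≤ K * (‖p - q‖ * exp (K * (b - a))) := by
          gcongr
          refine (hφ.norm_pullback_sub_le hT hK p q s hs).trans ?_
          gcongr
          exact hs.2
      _ = K * exp (K * (b - a)) * ‖p - q‖ := by ring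
  simpa only [Real.norm_eq_abs] using (convex_Icc a b).norm_image_sub_le_of_norm_hasDerivWithin_le
    (fun s _ => (hφ.hasDerivAt_pullback_sub hT a p q s).hasDerivWithinAt) hderiv ht₂ ht₁

theorem norm_sub_le (hφ : IsSolutionFlow A f φ)
    (hT : IsEvolutionFamily A T)
    (hK : PullbackLipschitzOn T f a K (Icc a b)) {τ : ℝ}
    (hτ : τ ∈ Icc a b) (p q : E) :
    ‖φ τ a p - φ τ a q‖ ≤ ‖T τ a‖ * exp (K * (τ - a)) * ‖p - q‖ :=
  calc ‖φ τ a p - φ τ a q‖ = ‖T τ a (T a τ (φ τ a p - φ τ a q))‖ := by rw [hT.apply_swap]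
    _ ≤ ‖T τ a‖ * (‖p - q‖ * exp (K * (τ - a))) :=
        (T τ a).le_opNorm_of_le (hφ.norm_pullback_sub_le hT hK p q τ hτ)
    _ = ‖T τ a‖ * exp (K * (τ - a)) * ‖p - q‖ := by ring

theorem norm_fderiv_le (hφ : IsSolutionFlow A f φ)
    (hT : IsEvolutionFamily A T)
    (hK : PullbackLipschitzOn T f a K (Icc a b))
    (hDφ : ∀ t t₀ x, HasFDerivAt (φ t t₀) (Dφ t t₀ x) x) {τ : ℝ} (hτ : τ ∈ Icc a b) (z : E) :
    ‖Dφ τ a z‖ ≤ ‖T τ a‖ * exp (K * (τ - a)) :=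
  (hDφ τ a z).le_of_lip' (by positivity)
    (Eventually.of_forall fun p => hφ.norm_sub_le hT hK hτ p z)

theorem norm_pullback_fderiv_sub_le (hφ : IsSolutionFlow A f φ)
    (hT : IsEvolutionFamily A T) (hK0 : 0 ≤ K)
    (hK : PullbackLipschitzOn T f a K (Icc a b))
    (hDφ : ∀ t t₀ x, HasFDerivAt (φ t t₀) (Dφ t t₀ x) x) (z : E) {t₁ t₂ : ℝ}
    (ht₁ : t₁ ∈ Icc a b) (ht₂ : t₂ ∈ Icc a b) :
    ‖(T a t₁).comp (Dφ t₁ a z) - (T a t₂).comp (Dφ t₂ a z)‖ ≤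
      K * exp (K * (b - a)) * |t₁ - t₂| := by
  have hD : HasFDerivAt (fun p => T a t₁ (φ t₁ a p) - T a t₂ (φ t₂ a p))
      ((T a t₁).comp (Dφ t₁ a z) - (T a t₂).comp (Dφ t₂ a z)) z :=
    ((T a t₁).hasFDerivAt.comp z (hDφ t₁ a z)).sub ((T a t₂).hasFDerivAt.comp z (hDφ t₂ a z))
  refine hD.le_of_lip' (by positivity) (Eventually.of_forall fun p => ?_)
  calc ‖T a t₁ (φ t₁ a p) - T a t₂ (φ t₂ a p) - (T a t₁ (φ t₁ a z) - T a t₂ (φ t₂ a z))‖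
      = ‖T a t₁ (φ t₁ a p - φ t₁ a z) - T a t₂ (φ t₂ a p - φ t₂ a z)‖ := by
        simp only [map_sub]; abel_nf
    _ ≤ K * exp (K * (b - a)) * ‖p - z‖ * |t₁ - t₂| :=
        hφ.norm_pullback_sub_sub_le hT hK0 hK p z t₁ ht₁ t₂ ht₂
    _ = K * exp (K * (b - a)) * |t₁ - t₂| * ‖p - z‖ := by ring

theorem continuousOn_fderiv (hφ : IsSolutionFlow A f φ)
    (hT : IsEvolutionFamily A T) (hK0 : 0 ≤ K)
    (hK : PullbackLipschitzOn T f a K (Icc a b))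
    (hDφ : ∀ t t₀ x, HasFDerivAt (φ t t₀) (Dφ t t₀ x) x) (z : E) :
    ContinuousOn (fun τ => Dφ τ a z) (Icc a b) := by
  have hpullback : ContinuousOn (fun τ => (T a τ).comp (Dφ τ a z)) (Icc a b) :=
    (LipschitzOnWith.of_dist_le_mul (K := (K * exp (K * (b - a))).toNNReal) fun t₁ ht₁ t₂ ht₂ => by
      rw [dist_eq_norm, Real.dist_eq, Real.coe_toNNReal _ (by positivity)]
      exact hφ.norm_pullback_fderiv_sub_le hT hK0 hK hDφ z ht₁ ht₂).continuousOn
  refine ((hT.continuous_left a).continuousOn.clm_comp hpullback).congr fun τ _ => ?_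
  change _ = (T τ a).comp ((T a τ).comp _)
  rw [← ContinuousLinearMap.comp_assoc, hT.comp_eq, hT.self_eq_id, ContinuousLinearMap.id_comp]

theorem norm_integrand_sub_le {P ε η B : ℝ} (hφ : IsSolutionFlow A f φ)
    (hT : IsEvolutionFamily A T) (hDφ : ∀ t t₀ x, HasFDerivAt (φ t t₀) (Dφ t t₀ x) x)
    (hP : ∀ r s, |r - s| ≤ 1 → ‖T r s‖ ≤ P * exp (ε * |s|)) (hP0 : 0 ≤ P) (hε : 0 ≤ ε)
    (hK : PullbackLipschitzOn T f a K (Icc a (a + 1)))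
    (hK0 : 0 ≤ K) (hη1 : η ≤ 1) (hF3 : ∀ t x, ‖Df t x‖ ≤ η * exp (-3 * ε * |t|))
    (hF4 : ∀ t x y, ‖Df t x - Df t y‖ ≤ B * exp (-4 * ε * |t|) * ‖x - y‖) (hB : 0 ≤ B)
    {r s : ℝ} (hr : r ∈ Icc a (a + 1)) (hs : s ∈ Icc a (a + 1)) (x y : E) :
    ‖(T r s).comp ((Df s (φ s a x)).comp (Dφ s a x)) -
        (T r s).comp ((Df s (φ s a y)).comp (Dφ s a y))‖ ≤
      P * ‖Dφ s a x - Dφ s a y‖ + P ^ 3 * B * exp (2 * K + 2 * ε) * ‖x - y‖ := by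
  set Q := P * exp (ε * |a|) * exp K
  have hQ : ‖T s a‖ * exp (K * (s - a)) ≤ Q :=
    mul_le_mul (hP s a (abs_sub_le_one_of_mem_Icc hs ⟨le_rfl, by linarith [hs.2]⟩))
      (exp_le_exp.2 (by nlinarith [hs.2])) (by positivity) (by positivity)
  have hDφy : ‖Dφ s a y‖ ≤ Q := (hφ.norm_fderiv_le hT hK hDφ hs y).trans hQ
  have hφxy : ‖φ s a x - φ s a y‖ ≤ Q * ‖x - y‖ :=
    (hφ.norm_sub_le hT hK hs x y).trans (by gcongr)
  have hexp₁ : ε * |s| + -3 * ε * |s| ≤ 0 := by nlinarith [abs_nonneg s]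
  have hexp₂ : ε * |s| + -4 * ε * |s| + ε * |a| + ε * |a| + K + K ≤ 2 * K + 2 * ε := by
    nlinarith [abs_le_abs_add_one_of_mem_Icc hs, abs_nonneg s]
  calc _ ≤ ‖T r s‖ * (‖Df s (φ s a x)‖ * ‖Dφ s a x - Dφ s a y‖ +
          ‖Df s (φ s a x) - Df s (φ s a y)‖ * ‖Dφ s a y‖) :=
        ContinuousLinearMap.norm_comp_comp_sub_comp_comp_le _ _ _ _ _
    _ ≤ P * exp (ε * |s|) * (η * exp (-3 * ε * |s|) * ‖Dφ s a x - Dφ s a y‖ +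
          B * exp (-4 * ε * |s|) * (Q * ‖x - y‖) * Q) := by
        gcongr
        · exact hP r s (abs_sub_le_one_of_mem_Icc hr hs)
        · exact hF3 _ _
        · exact (hF4 _ _ _).trans (by gcongr)
    _ = P * (η * exp (ε * |s| + -3 * ε * |s|)) * ‖Dφ s a x - Dφ s a y‖ +
          P ^ 3 * B * exp (ε * |s| + -4 * ε * |s| + ε * |a| + ε * |a| + K + K) * ‖x - y‖ := by
        simp only [Q, exp_add]; ring
    _ ≤ P * (1 * exp 0) * ‖Dφ s a x - Dφ s a y‖ +
          P ^ 3 * B * exp (2 * K + 2 * ε) * ‖x - y‖ := by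
        gcongr
    _ = _ := by rw [exp_zero, one_mul, mul_one]

theorem norm_fderiv_sub_le_add_integral {P ε η B : ℝ} (hφ : IsSolutionFlow A f φ)
    (hT : IsEvolutionFamily A T) (hDφ : ∀ t t₀ x, HasFDerivAt (φ t t₀) (Dφ t t₀ x) x)
    (hDvop : ∀ t t₀ x, Dφ t t₀ x =
      T t t₀ + ∫ s in t₀..t, (T t s).comp ((Df s (φ s t₀ x)).comp (Dφ s t₀ x)))
    (hDf_cont : Continuous (fun p : ℝ × E => Df p.1 p.2))
    (hP : ∀ r s, |r - s| ≤ 1 → ‖T r s‖ ≤ P * exp (ε * |s|)) (hP0 : 0 ≤ P) (hε : 0 ≤ ε)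
    (hK : PullbackLipschitzOn T f a K (Icc a (a + 1)))
    (hK0 : 0 ≤ K) (hη1 : η ≤ 1) (hF3 : ∀ t x, ‖Df t x‖ ≤ η * exp (-3 * ε * |t|))
    (hF4 : ∀ t x y, ‖Df t x - Df t y‖ ≤ B * exp (-4 * ε * |t|) * ‖x - y‖) (hB : 0 ≤ B)
    {r : ℝ} (hr : r ∈ Icc a (a + 1)) (x y : E) :
    ‖Dφ r a x - Dφ r a y‖ ≤ P ^ 3 * B * exp (2 * K + 2 * ε) * ‖x - y‖ +
      P * ∫ s in a..r, ‖Dφ s a x - Dφ s a y‖ := by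
  set c := P ^ 3 * B * exp (2 * K + 2 * ε) * ‖x - y‖
  have hsub : uIcc a r ⊆ Icc a (a + 1) := by
    rw [uIcc_of_le hr.1]; exact Icc_subset_Icc le_rfl hr.2
  have hcont : ∀ z, ContinuousOn (fun s => Dφ s a z) (uIcc a r) := fun z =>
    (hφ.continuousOn_fderiv hT hK0 hK hDφ z).mono hsub
  have hint : ∀ z, IntervalIntegrable
      (fun s => (T r s).comp ((Df s (φ s a z)).comp (Dφ s a z))) MeasureTheory.volume a r :=
    fun z => ContinuousOn.intervalIntegrable <| (hT.continuous_right r).continuousOn.clm_comp <|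
      (hDf_cont.comp (continuous_id.prodMk (hφ.continuous a z))).continuousOn.clm_comp (hcont z)
  have hΔ : IntervalIntegrable (fun s => P * ‖Dφ s a x - Dφ s a y‖) MeasureTheory.volume a r :=
    (continuousOn_const.mul ((hcont x).sub (hcont y)).norm).intervalIntegrable
  calc ‖Dφ r a x - Dφ r a y‖
      = ‖∫ s in a..r, ((T r s).comp ((Df s (φ s a x)).comp (Dφ s a x)) -
          (T r s).comp ((Df s (φ s a y)).comp (Dφ s a y)))‖ := by
        rw [intervalIntegral.integral_sub (hint x) (hint y), hDvop r a x, hDvop r a y]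
        abel_nf
    _ ≤ ∫ s in a..r, (P * ‖Dφ s a x - Dφ s a y‖ + c) :=
        intervalIntegral.norm_integral_le_of_norm_le hr.1 (Eventually.of_forall fun s hs =>
          hφ.norm_integrand_sub_le hT hDφ hP hP0 hε hK hK0 hη1 hF3 hF4 hB hr
            ⟨hs.1.le, hs.2.trans hr.2⟩ x y)
          (hΔ.add intervalIntegrable_const)
    _ = c * (r - a) + P * ∫ s in a..r, ‖Dφ s a x - Dφ s a y‖ := by
        rw [intervalIntegral.integral_add hΔ intervalIntegrable_const,
          intervalIntegral.integral_const_mul, intervalIntegral.integral_const, smul_eq_mul]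
        ring
    _ ≤ c + P * ∫ s in a..r, ‖Dφ s a x - Dφ s a y‖ := by
        gcongr
        nlinarith [hr.2, show 0 ≤ c by positivity]

theorem norm_fderiv_sub_le {P ε η B : ℝ} (hφ : IsSolutionFlow A f φ)
    (hT : IsEvolutionFamily A T) (hDφ : ∀ t t₀ x, HasFDerivAt (φ t t₀) (Dφ t t₀ x) x)
    (hDvop : ∀ t t₀ x, Dφ t t₀ x =
      T t t₀ + ∫ s in t₀..t, (T t s).comp ((Df s (φ s t₀ x)).comp (Dφ s t₀ x)))
    (hDf_cont : Continuous (fun p : ℝ × E => Df p.1 p.2))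
    (hP : ∀ r s, |r - s| ≤ 1 → ‖T r s‖ ≤ P * exp (ε * |s|)) (hP0 : 0 ≤ P) (hε : 0 ≤ ε)
    (hK : PullbackLipschitzOn T f a K (Icc a (a + 1)))
    (hK0 : 0 ≤ K) (hη1 : η ≤ 1) (hF3 : ∀ t x, ‖Df t x‖ ≤ η * exp (-3 * ε * |t|))
    (hF4 : ∀ t x y, ‖Df t x - Df t y‖ ≤ B * exp (-4 * ε * |t|) * ‖x - y‖) (hB : 0 ≤ B)
    {t : ℝ} (ht : t ∈ Icc a (a + 1)) (x y : E) :
    ‖Dφ t a x - Dφ t a y‖ ≤ P ^ 3 * B * exp (2 * K + 2 * ε) * exp P * ‖x - y‖ := by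
  set c := P ^ 3 * B * exp (2 * K + 2 * ε) * ‖x - y‖
  have hcont : ∀ z, ContinuousOn (fun s => Dφ s a z) (Icc a (a + 1)) :=
    hφ.continuousOn_fderiv hT hK0 hK hDφ
  calc ‖Dφ t a x - Dφ t a y‖ ≤ c * exp (P * (t - a)) :=
        le_mul_exp_of_le_add_mul_integral hP0 ((hcont x).sub (hcont y)).norm
          (fun r hr => hφ.norm_fderiv_sub_le_add_integral hT hDφ hDvop hDf_cont hP hP0 hε hK hK0
            hη1 hF3 hF4 hB hr x y) t ht
    _ ≤ c * exp P := by
        gcongr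
        nlinarith [ht.2]
    _ = _ := by ring

end IsSolutionFlow

theorem derivative_of_solution_lipschitz_in_initial_condition_general (d : ℕ)
    -- the linear equation x' = A(t)x and its evolution family T(t,s)
    (A : ℝ → Ed d →L[ℝ] Ed d) (T : ℝ → ℝ → Ed d →L[ℝ] Ed d)
    (hT_id : ∀ t, T t t = ContinuousLinearMap.id ℝ (Ed d))
    (hT_comp : ∀ t s r, (T t s).comp (T s r) = T t r)
    (hT_deriv : ∀ s x t, HasDerivAt (fun τ => T τ s x) (A t (T t s x)) t)
    (M lamBar eps η : ℝ) (hM : 0 < M) (hlamBar : 0 < lamBar) (heps : 0 ≤ eps)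
    (hη : 0 < η) (hη1 : η ≤ 1)
    (hgrowth : ∀ t s, ‖T t s‖ ≤ M * Real.exp (lamBar * |t - s| + eps * |s|))
    -- the perturbation f, continuous, C¹ in x with jointly continuous derivative
    (f : ℝ → Ed d → Ed d) (Df : ℝ → Ed d → (Ed d →L[ℝ] Ed d))
    (hf_diff : ∀ t x, HasFDerivAt (f t) (Df t x) x)
    (hDf_cont : Continuous (fun p : ℝ × Ed d => Df p.1 p.2))
    -- (F3) and (F4)
    (B : ℝ) (hB : 0 < B)
    (hF3 : ∀ t x, ‖Df t x‖ ≤ η * Real.exp (-3 * eps * |t|))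
    (hF4 : ∀ t x y, ‖Df t x - Df t y‖ ≤ B * Real.exp (-4 * eps * |t|) * ‖x - y‖)
    -- φ(t,t₀;x): the globally defined solution of x' = A(t)x + f(t,x), C¹ in x,
    -- satisfying the variation-of-parameters formula
    (φ : ℝ → ℝ → Ed d → Ed d) (Dφ : ℝ → ℝ → Ed d → (Ed d →L[ℝ] Ed d))
    (hφ_init : ∀ t₀ x, φ t₀ t₀ x = x)
    (hφ_sol : ∀ t₀ x t, HasDerivAt (fun τ => φ τ t₀ x) (A t (φ t t₀ x) + f t (φ t t₀ x)) t)
    (hφ_diff : ∀ t t₀ x, HasFDerivAt (φ t t₀) (Dφ t t₀ x) x)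
    (hDvop : ∀ t t₀ x, Dφ t t₀ x =
      T t t₀ + ∫ s in t₀..t, (T t s).comp ((Df s (φ s t₀ x)).comp (Dφ s t₀ x))) :
    -- then there is d' > 0 with ‖D_xφ(t,n;x) − D_xφ(t,n;y)‖ ≤ d' ‖x−y‖
    -- for all n ∈ ℤ, t ∈ [n, n+1] and x, y ∈ ℝ^d
    ∃ d' : ℝ, 0 < d' ∧
      ∀ (n : ℤ) (t : ℝ) (x y : Ed d), t ∈ Set.Icc (n : ℝ) ((n : ℝ) + 1) →
        ‖Dφ t (n : ℝ) x - Dφ t (n : ℝ) y‖ ≤ d' * ‖x - y‖ := by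
  have hT : IsEvolutionFamily A T := ⟨hT_id, hT_comp, hT_deriv⟩
  have hφ : IsSolutionFlow A f φ := ⟨hφ_init, hφ_sol⟩
  have hP : ∀ r s, |r - s| ≤ 1 → ‖T r s‖ ≤ M * exp lamBar * exp (eps * |s|) := fun r s h =>
    (hgrowth r s).trans <| by
      rw [exp_add, ← mul_assoc]
      gcongr
      exact mul_le_of_le_one_right hlamBar.le h
  have hf : ∀ s p q, ‖f s p - f s q‖ ≤ η * exp (-3 * eps * |s|) * ‖p - q‖ := fun s p q =>
    convex_univ.norm_image_sub_le_of_norm_hasFDerivWithin_le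
      (fun z _ => (hf_diff s z).hasFDerivWithinAt) (fun z _ => hF3 s z) trivial trivial
  exact ⟨_, by positivity, fun n t x y ht =>
    hφ.norm_fderiv_sub_le hT hφ_diff hDvop hDf_cont hP (by positivity) heps
      (hT.pullbackLipschitzOn_of_decay hP (by positivity) heps hη.le hη1 hf n) (by positivity)
      hη1 hF3 hF4 hB.le ht x y⟩

theorem derivative_of_solution_lipschitz_in_initial_condition (d : ℕ)
    -- the linear equation x' = A(t)x and its evolution family T(t,s)
    (A : ℝ → Ed d →L[ℝ] Ed d) (T : ℝ → ℝ → Ed d →L[ℝ] Ed d)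
    (hT_id : ∀ t, T t t = ContinuousLinearMap.id ℝ (Ed d))
    (hT_comp : ∀ t s r, (T t s).comp (T s r) = T t r)
    (hT_deriv : ∀ s x t, HasDerivAt (fun τ => T τ s x) (A t (T t s x)) t)
    (M lamBar eps η : ℝ) (hM : 0 < M) (hlamBar : 0 < lamBar) (heps : 0 ≤ eps)
    (hη : 0 < η) (hη1 : η ≤ 1)
    (hgrowth : ∀ t s, ‖T t s‖ ≤ M * Real.exp (lamBar * |t - s| + eps * |s|))
    -- the perturbation f, continuous, C¹ in x with jointly continuous derivative
    (f : ℝ → Ed d → Ed d) (Df : ℝ → Ed d → (Ed d →L[ℝ] Ed d))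
    (hf_cont : Continuous (fun p : ℝ × Ed d => f p.1 p.2))
    (hf_diff : ∀ t x, HasFDerivAt (f t) (Df t x) x)
    (hDf_cont : Continuous (fun p : ℝ × Ed d => Df p.1 p.2))
    -- (F3) and (F4)
    (B : ℝ) (hB : 0 < B)
    (hF3 : ∀ t x, ‖Df t x‖ ≤ η * Real.exp (-3 * eps * |t|))
    (hF4 : ∀ t x y, ‖Df t x - Df t y‖ ≤ B * Real.exp (-4 * eps * |t|) * ‖x - y‖)
    -- φ(t,t₀;x): the globally defined solution of x' = A(t)x + f(t,x), C¹ in x,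
    -- satisfying the variation-of-parameters formula
    (φ : ℝ → ℝ → Ed d → Ed d) (Dφ : ℝ → ℝ → Ed d → (Ed d →L[ℝ] Ed d))
    (hφ_init : ∀ t₀ x, φ t₀ t₀ x = x)
    (hφ_sol : ∀ t₀ x t, HasDerivAt (fun τ => φ τ t₀ x) (A t (φ t t₀ x) + f t (φ t t₀ x)) t)
    (hφ_diff : ∀ t t₀ x, HasFDerivAt (φ t t₀) (Dφ t t₀ x) x)
    (hDvop : ∀ t t₀ x, Dφ t t₀ x =
      T t t₀ + ∫ s in t₀..t, (T t s).comp ((Df s (φ s t₀ x)).comp (Dφ s t₀ x))) :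
    -- then there is d' > 0 with ‖D_xφ(t,n;x) − D_xφ(t,n;y)‖ ≤ d' ‖x−y‖
    -- for all n ∈ ℤ, t ∈ [n, n+1] and x, y ∈ ℝ^d
    ∃ d' : ℝ, 0 < d' ∧
      ∀ (n : ℤ) (t : ℝ) (x y : Ed d), t ∈ Set.Icc (n : ℝ) ((n : ℝ) + 1) →
        ‖Dφ t (n : ℝ) x - Dφ t (n : ℝ) y‖ ≤ d' * ‖x - y‖ :=
  derivative_of_solution_lipschitz_in_initial_condition_general d A T hT_id hT_comp hT_deriv M
    lamBar eps η hM hlamBar heps hη hη1 hgrowth f Df hf_diff hDf_cont B hB hF3 hF4 φ Dφ hφ_init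
    hφ_sol hφ_diff hDvop

end
end

section
/- Let (A_n)_{n∈ℤ} be invertible linear operators on ℝ^d with ‖A_n x‖_{n+1} ≤ Me^{λ̄}‖x‖_n for norms ‖·‖_n satisfying ‖x‖ ≤ ‖x‖_n ≤ Ce^{ε|n|}‖x‖ (C > 0, ε ≥ 0), and let (f_n)_{n∈ℤ} be C¹ maps ℝ^d → ℝ^d with f_n(0) = 0, Df_n(0) = 0, ‖Df_n(x)‖ ≤ η̃e^{−ε|n|} and ‖Df_n(x) − Df_n(y)‖ ≤ B̃e^{−ε|n|}‖x−y‖ for all x,y (η̃, B̃ > 0). Define F : Y_∞ → Y_∞ by (F(x))_n := A_{n−1}x_{n−1} + f_{n−1}(x_{n−1}) and 𝔸 : Y_∞ → Y_∞ by (𝔸x)_n := A_{n−1}x_{n−1}. Then F is well defined and Fréchet differentiable with DF(x)ξ = (A_{n−1}ξ_{n−1} + Df_{n−1}(x_{n−1})ξ_{n−1})_{n∈ℤ}; moreover ‖DF(x) − DF(y)‖ ≤ Ce^{ε}B̃‖x−y‖ and ‖DF(x) − 𝔸‖ ≤ Ce^{ε}η̃ for all x,y ∈ Y_∞. In particular F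 is C^{1,1} and 0 is a fixed point of F with DF(0) = 𝔸. -/
/- STATEMENT 17: The map F on Y_∞ induced by the perturbed dynamics
(F(x))_n = A_{n-1} x_{n-1} + f_{n-1}(x_{n-1}) is well defined, Fréchet
differentiable, C^{1,1} with the stated Lipschitz bounds, and has the hyperbolic
fixed point 0 with DF(0) = 𝔸. -/

noncomputable section

/-- A family of norms on `ℝ^d` indexed by `ℤ`, each bounded below by the ambient norm
(so each seminorm is in fact a norm). -/
structure NormFamily (d : ℕ) where
  N : ℤ → Seminorm ℝ (Ed d)
  lower : ∀ (n : ℤ) (x : Ed d), ‖x‖ ≤ N n x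

variable {d : ℕ}

/-- The submodule of two-sided sequences with bounded weighted norms. -/
def YinfSubmodule (𝒩 : NormFamily d) : Submodule ℝ (ℤ → Ed d) where
  carrier := {x | ∃ C : ℝ, ∀ n : ℤ, 𝒩.N n (x n) ≤ C}
  add_mem' := by
    rintro x y ⟨Cx, hx⟩ ⟨Cy, hy⟩
    exact ⟨Cx + Cy, fun n => le_trans (map_add_le_add _ _ _) (add_le_add (hx n) (hy n))⟩
  zero_mem' := ⟨0, fun n => by simp⟩
  smul_mem' := by
    rintro c x ⟨Cx, hx⟩
    refine ⟨‖c‖ * Cx, fun n => ?_⟩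
    rw [Pi.smul_apply, map_smul_eq_mul]
    exact mul_le_mul_of_nonneg_left (hx n) (norm_nonneg c)

/-- The Banach space `Y_∞` of sequences bounded with respect to the family of norms,
equipped with the norm `‖x‖ = sup_n ‖x_n‖_n`. -/
def Yinf (𝒩 : NormFamily d) : Type := ↥(YinfSubmodule 𝒩)

instance (𝒩 : NormFamily d) : AddCommGroup (Yinf 𝒩) :=
  inferInstanceAs (AddCommGroup (YinfSubmodule 𝒩))

instance (𝒩 : NormFamily d) : Module ℝ (Yinf 𝒩) :=
  inferInstanceAs (Module ℝ (YinfSubmodule 𝒩))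

namespace Yinf

variable {𝒩 : NormFamily d}

/-- The underlying sequence. -/
def seq (x : Yinf 𝒩) : ℤ → Ed d := x.1

lemma bddAbove (x : Yinf 𝒩) : BddAbove (Set.range fun n => 𝒩.N n (x.seq n)) := by
  obtain ⟨C, hC⟩ := x.2
  exact ⟨C, by rintro _ ⟨n, rfl⟩; exact hC n⟩

@[simp] lemma seq_add (x y : Yinf 𝒩) (n : ℤ) : (x + y).seq n = x.seq n + y.seq n := rfl
@[simp] lemma seq_neg (x : Yinf 𝒩) (n : ℤ) : (-x).seq n = -(x.seq n) := rfl
@[simp] lemma seq_smul (c : ℝ) (x : Yinf 𝒩) (n : ℤ) : (c • x).seq n = c • (x.seq n) := rfl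
@[simp] lemma seq_zero (n : ℤ) : (0 : Yinf 𝒩).seq n = 0 := rfl

instance : NormedAddCommGroup (Yinf 𝒩) :=
  AddGroupNorm.toNormedAddCommGroup
    { toFun := fun x => ⨆ n : ℤ, 𝒩.N n (x.seq n)
      map_zero' := by simp
      add_le' := by
        intro x y
        refine ciSup_le fun n => ?_
        calc 𝒩.N n ((x + y).seq n) = 𝒩.N n (x.seq n + y.seq n) := by rw [seq_add]
          _ ≤ 𝒩.N n (x.seq n) + 𝒩.N n (y.seq n) := map_add_le_add _ _ _
          _ ≤ _ := add_le_add (le_ciSup x.bddAbove n) (le_ciSup y.bddAbove n)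
      neg' := by
        intro x
        refine iSup_congr fun n => ?_
        rw [seq_neg, map_neg_eq_map]
      eq_zero_of_map_eq_zero' := by
        intro x hx
        have h0 : ∀ n : ℤ, x.seq n = 0 := by
          intro n
          have h1 : 𝒩.N n (x.seq n) ≤ 0 := hx ▸ le_ciSup x.bddAbove n
          have h2 : ‖x.seq n‖ ≤ 0 := le_trans (𝒩.lower n _) h1
          exact norm_le_zero_iff.mp h2
        apply Subtype.ext
        funext n
        exact h0 n }

lemma norm_def (x : Yinf 𝒩) : ‖x‖ = ⨆ n : ℤ, 𝒩.N n (x.seq n) := rfl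

instance : NormedSpace ℝ (Yinf 𝒩) where
  norm_smul_le c x := by
    rw [norm_def, norm_def]
    rw [Real.mul_iSup_of_nonneg (norm_nonneg c)]
    refine ciSup_le fun n => ?_
    rw [seq_smul, map_smul_eq_mul]
    have hb : BddAbove (Set.range fun m : ℤ => ‖c‖ * 𝒩.N m (x.seq m)) := by
      obtain ⟨C, hC⟩ := x.bddAbove
      refine ⟨‖c‖ * C, ?_⟩
      rintro _ ⟨m, rfl⟩
      exact mul_le_mul_of_nonneg_left (hC ⟨m, rfl⟩) (norm_nonneg c)
    exact le_ciSup hb n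

end Yinf

namespace Yinf

variable {𝒩 : NormFamily d}

lemma seq_le_norm (x : Yinf 𝒩) (n : ℤ) : 𝒩.N n (x.seq n) ≤ ‖x‖ :=
  (norm_def x) ▸ le_ciSup x.bddAbove n

lemma norm_le' (x : Yinf 𝒩) {K : ℝ} (h : ∀ n, 𝒩.N n (x.seq n) ≤ K) : ‖x‖ ≤ K := by
  rw [norm_def]; exact ciSup_le h

@[simp] lemma seq_sub (x y : Yinf 𝒩) (n : ℤ) : (x - y).seq n = x.seq n - y.seq n := rfl

end Yinf

section AuxMVT

variable {E : Type*} [NormedAddCommGroup E] [NormedSpace ℝ E]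
  {G : Type*} [NormedAddCommGroup G] [NormedSpace ℝ G]

lemma aux_lin_bound (f : E → G) (Df : E → E →L[ℝ] G)
    (hdiff : ∀ z, HasFDerivAt f (Df z) z) (h0 : f 0 = 0) {c : ℝ}
    (hc : ∀ z, ‖Df z‖ ≤ c) (z : E) : ‖f z‖ ≤ c * ‖z‖ := by
  have := convex_univ.norm_image_sub_le_of_norm_hasFDerivWithin_le
    (f' := Df) (fun u _ => (hdiff u).hasFDerivWithinAt) (fun u _ => hc u)
    (Set.mem_univ (0 : E)) (Set.mem_univ z)
  simpa [h0] using this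

lemma aux_taylor (f : E → G) (Df : E → E →L[ℝ] G)
    (hdiff : ∀ z, HasFDerivAt f (Df z) z) {L : ℝ} (hL : 0 ≤ L)
    (hlip : ∀ u w, ‖Df u - Df w‖ ≤ L * ‖u - w‖) (a h : E) :
    ‖f (a + h) - f a - Df a h‖ ≤ L * ‖h‖ * ‖h‖ := by
  set b := a + h with hb
  have hba : b - a = h := by simp [hb]
  have bound : ∀ z ∈ segment ℝ a b, ‖Df z - Df a‖ ≤ L * ‖h‖ := by
    intro z hz
    obtain ⟨u, v, hu, hv, huv, rfl⟩ := hz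
    have hu1 : u = 1 - v := by linarith
    have hv1 : v ≤ 1 := by linarith
    have hzz : u • a + v • b - a = v • (b - a) := by rw [hu1]; module
    calc ‖Df (u • a + v • b) - Df a‖ ≤ L * ‖u • a + v • b - a‖ := hlip _ _
      _ = L * (v * ‖h‖) := by rw [hzz, hba, norm_smul, Real.norm_of_nonneg hv]
      _ ≤ L * (1 * ‖h‖) := by
          apply mul_le_mul_of_nonneg_left _ hL
          exact mul_le_mul_of_nonneg_right hv1 (norm_nonneg h)
      _ = L * ‖h‖ := by ring
  have key := (convex_segment a b).norm_image_sub_le_of_norm_hasFDerivWithin_le'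
    (f' := Df) (φ := Df a) (C := L * ‖h‖)
    (fun z _ => (hdiff z).hasFDerivWithinAt) bound
    (left_mem_segment ℝ a b) (right_mem_segment ℝ a b)
  rw [hba] at key
  exact key

end AuxMVT


theorem induced_map_on_Yinf_C11 (d : ℕ)
    -- the norms ‖·‖_n and their comparison with the ambient norm
    (𝒩 : NormFamily d) (C eps : ℝ) (hC : 0 < C) (heps : 0 ≤ eps)
    (hupN : ∀ (n : ℤ) (x : Ed d), 𝒩.N n x ≤ C * Real.exp (eps * |(n : ℝ)|) * ‖x‖)
    -- the invertible operators A_n with ‖A_n x‖_{n+1} ≤ M e^{λ̄} ‖x‖_n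
    (A : ℤ → (Ed d ≃L[ℝ] Ed d)) (M lamBar : ℝ) (hM : 0 < M) (hlamBar : 0 < lamBar)
    (hA : ∀ (n : ℤ) (x : Ed d), 𝒩.N (n + 1) (A n x) ≤ M * Real.exp lamBar * 𝒩.N n x)
    -- the maps f_n : C¹ with f_n(0) = 0, Df_n(0) = 0 and the bounds on Df_n
    (f : ℤ → Ed d → Ed d) (Df : ℤ → Ed d → (Ed d →L[ℝ] Ed d)) (η B : ℝ)
    (hη : 0 < η) (hB : 0 < B)
    (hf_diff : ∀ n x, HasFDerivAt (f n) (Df n x) x)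
    (hf0 : ∀ n, f n 0 = 0) (hDf0 : ∀ n, Df n 0 = 0)
    (hDf_bdd : ∀ n x, ‖Df n x‖ ≤ η * Real.exp (-eps * |(n : ℝ)|))
    (hDf_lip : ∀ n x y, ‖Df n x - Df n y‖ ≤ B * Real.exp (-eps * |(n : ℝ)|) * ‖x - y‖)
    -- the bounded operator 𝔸 on Y_∞, (𝔸 x)_n = A_{n-1} x_{n-1}
    (𝔸 : Yinf 𝒩 →L[ℝ] Yinf 𝒩)
    (h𝔸 : ∀ (x : Yinf 𝒩) (n : ℤ), (𝔸 x).seq n = A (n - 1) (x.seq (n - 1))) :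
    -- then F is well defined and C^{1,1} with the derivative and bounds as claimed
    ∃ (F : Yinf 𝒩 → Yinf 𝒩) (DF : Yinf 𝒩 → (Yinf 𝒩 →L[ℝ] Yinf 𝒩)),
      -- F is well defined by (F(x))_n = A_{n-1} x_{n-1} + f_{n-1}(x_{n-1})
      (∀ (x : Yinf 𝒩) (n : ℤ),
        (F x).seq n = A (n - 1) (x.seq (n - 1)) + f (n - 1) (x.seq (n - 1))) ∧
      -- F is Fréchet differentiable with
      -- DF(x)ξ = (A_{n-1} ξ_{n-1} + Df_{n-1}(x_{n-1}) ξ_{n-1})_n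
      (∀ x : Yinf 𝒩, HasFDerivAt F (DF x) x) ∧
      (∀ (x ξ : Yinf 𝒩) (n : ℤ),
        ((DF x) ξ).seq n = A (n - 1) (ξ.seq (n - 1)) +
          Df (n - 1) (x.seq (n - 1)) (ξ.seq (n - 1))) ∧
      -- F is C^{1,1}: ‖DF(x) − DF(y)‖ ≤ C e^{ε} B ‖x − y‖
      (∀ x y : Yinf 𝒩, ‖DF x - DF y‖ ≤ C * Real.exp eps * B * ‖x - y‖) ∧
      -- ‖DF(x) − 𝔸‖ ≤ C e^{ε} η
      (∀ x : Yinf 𝒩, ‖DF x - 𝔸‖ ≤ C * Real.exp eps * η) ∧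
      -- 0 is a fixed point of F and DF(0) = 𝔸
      F 0 = 0 ∧ DF 0 = 𝔸 := by
  classical
  have hexp : ∀ n : ℤ, Real.exp (eps * |(n : ℝ)|) * Real.exp (-eps * |((n - 1 : ℤ) : ℝ)|)
      ≤ Real.exp eps := by
    intro n
    rw [← Real.exp_add]
    apply Real.exp_le_exp.mpr
    have h1 : |(n : ℝ)| - |((n - 1 : ℤ) : ℝ)| ≤ 1 := by
      have h := abs_sub_abs_le_abs_sub (n : ℝ) ((n - 1 : ℤ) : ℝ)
      push_cast at h ⊢
      simpa using h
    nlinarith [mul_le_mul_of_nonneg_left h1 heps]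
  have comp : ∀ (n : ℤ) (v : Ed d) (K : ℝ), 0 ≤ K →
      ‖v‖ ≤ K * Real.exp (-eps * |((n - 1 : ℤ) : ℝ)|) → 𝒩.N n v ≤ C * Real.exp eps * K := by
    intro n v K hK hv
    calc 𝒩.N n v ≤ C * Real.exp (eps * |(n : ℝ)|) * ‖v‖ := hupN n v
      _ ≤ C * Real.exp (eps * |(n : ℝ)|) * (K * Real.exp (-eps * |((n - 1 : ℤ) : ℝ)|)) := by
          apply mul_le_mul_of_nonneg_left hv; positivity
      _ = C * K * (Real.exp (eps * |(n : ℝ)|) * Real.exp (-eps * |((n - 1 : ℤ) : ℝ)|)) := by ring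
      _ ≤ C * K * Real.exp eps := by
          apply mul_le_mul_of_nonneg_left (hexp n); positivity
      _ = C * Real.exp eps * K := by ring
  have seqnorm : ∀ (x : Yinf 𝒩) (m : ℤ), ‖x.seq m‖ ≤ ‖x‖ := fun x m =>
    (𝒩.lower m _).trans (x.seq_le_norm m)
  have hfz : ∀ (m : ℤ) (z : Ed d), ‖f m z‖ ≤ η * Real.exp (-eps * |(m : ℝ)|) * ‖z‖ :=
    fun m z => aux_lin_bound (f m) (Df m) (hf_diff m) (hf0 m) (hDf_bdd m) z
  have hGn : ∀ (x : Yinf 𝒩) (n : ℤ),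
      𝒩.N n (f (n - 1) (x.seq (n - 1))) ≤ C * Real.exp eps * (η * ‖x‖) := by
    intro x n
    apply comp n _ _ (by positivity)
    calc ‖f (n - 1) (x.seq (n - 1))‖
        ≤ η * Real.exp (-eps * |((n - 1 : ℤ) : ℝ)|) * ‖x.seq (n - 1)‖ := hfz _ _
      _ ≤ η * Real.exp (-eps * |((n - 1 : ℤ) : ℝ)|) * ‖x‖ := by
          apply mul_le_mul_of_nonneg_left (seqnorm x _); positivity
      _ = η * ‖x‖ * Real.exp (-eps * |((n - 1 : ℤ) : ℝ)|) := by ring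
  have hAn : ∀ (x : Yinf 𝒩) (n : ℤ),
      𝒩.N n (A (n - 1) (x.seq (n - 1))) ≤ M * Real.exp lamBar * ‖x‖ := by
    intro x n
    have h := hA (n - 1) (x.seq (n - 1))
    have hn : n - 1 + 1 = n := by omega
    rw [hn] at h
    refine h.trans ?_
    apply mul_le_mul_of_nonneg_left (x.seq_le_norm _); positivity
  have hFmem : ∀ x : Yinf 𝒩,
      (fun n => A (n - 1) (x.seq (n - 1)) + f (n - 1) (x.seq (n - 1))) ∈ YinfSubmodule 𝒩 := by
    intro x
    exact ⟨M * Real.exp lamBar * ‖x‖ + C * Real.exp eps * (η * ‖x‖), fun n =>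
      (map_add_le_add _ _ _).trans (add_le_add (hAn x n) (hGn x n))⟩
  have hDGn : ∀ (x ξ : Yinf 𝒩) (n : ℤ),
      𝒩.N n (Df (n - 1) (x.seq (n - 1)) (ξ.seq (n - 1))) ≤ C * Real.exp eps * (η * ‖ξ‖) := by
    intro x ξ n
    apply comp n _ _ (by positivity)
    calc ‖Df (n - 1) (x.seq (n - 1)) (ξ.seq (n - 1))‖
        ≤ ‖Df (n - 1) (x.seq (n - 1))‖ * ‖ξ.seq (n - 1)‖ := ContinuousLinearMap.le_opNorm _ _
      _ ≤ η * Real.exp (-eps * |((n - 1 : ℤ) : ℝ)|) * ‖ξ‖ :=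
          mul_le_mul (hDf_bdd _ _) (seqnorm ξ _) (norm_nonneg _) (by positivity)
      _ = η * ‖ξ‖ * Real.exp (-eps * |((n - 1 : ℤ) : ℝ)|) := by ring
  have hDGmem : ∀ (x ξ : Yinf 𝒩),
      (fun n => Df (n - 1) (x.seq (n - 1)) (ξ.seq (n - 1))) ∈ YinfSubmodule 𝒩 :=
    fun x ξ => ⟨C * Real.exp eps * (η * ‖ξ‖), fun n => hDGn x ξ n⟩
  let DG : Yinf 𝒩 → Yinf 𝒩 →ₗ[ℝ] Yinf 𝒩 := fun x =>
    { toFun := fun ξ => ⟨fun n => Df (n - 1) (x.seq (n - 1)) (ξ.seq (n - 1)), hDGmem x ξ⟩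
      map_add' := by
        intro ξ₁ ξ₂
        apply Subtype.ext
        funext n
        show Df (n - 1) (x.seq (n - 1)) ((ξ₁ + ξ₂).seq (n - 1)) = _
        rw [Yinf.seq_add, map_add]
        rfl
      map_smul' := by
        intro c ξ
        apply Subtype.ext
        funext n
        show Df (n - 1) (x.seq (n - 1)) ((c • ξ).seq (n - 1)) = _
        rw [Yinf.seq_smul, map_smul]
        rfl }
  have hDGseq : ∀ (x ξ : Yinf 𝒩) (n : ℤ),
      (DG x ξ).seq n = Df (n - 1) (x.seq (n - 1)) (ξ.seq (n - 1)) := fun _ _ _ => rfl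
  have hDGnorm : ∀ (x ξ : Yinf 𝒩), ‖DG x ξ‖ ≤ C * Real.exp eps * η * ‖ξ‖ := by
    intro x ξ
    apply Yinf.norm_le'
    intro n
    rw [hDGseq]
    refine (hDGn x ξ n).trans (le_of_eq ?_)
    ring
  let DGc : Yinf 𝒩 → Yinf 𝒩 →L[ℝ] Yinf 𝒩 := fun x =>
    LinearMap.mkContinuous (DG x) (C * Real.exp eps * η) (hDGnorm x)
  let F : Yinf 𝒩 → Yinf 𝒩 := fun x =>
    ⟨fun n => A (n - 1) (x.seq (n - 1)) + f (n - 1) (x.seq (n - 1)), hFmem x⟩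
  let DF : Yinf 𝒩 → Yinf 𝒩 →L[ℝ] Yinf 𝒩 := fun x => 𝔸 + DGc x
  have hFseq : ∀ (x : Yinf 𝒩) (n : ℤ),
      (F x).seq n = A (n - 1) (x.seq (n - 1)) + f (n - 1) (x.seq (n - 1)) := fun _ _ => rfl
  have hDFseq : ∀ (x ξ : Yinf 𝒩) (n : ℤ),
      (DF x ξ).seq n = A (n - 1) (ξ.seq (n - 1)) +
        Df (n - 1) (x.seq (n - 1)) (ξ.seq (n - 1)) := by
    intro x ξ n
    show (𝔸 ξ + DG x ξ).seq n = _
    rw [Yinf.seq_add, h𝔸, hDGseq]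
  refine ⟨F, DF, hFseq, ?_, hDFseq, ?_, ?_, ?_, ?_⟩
  -- differentiability
  · intro x
    rw [hasFDerivAt_iff_isLittleO_nhds_zero, Asymptotics.isLittleO_iff]
    intro c hc
    have hquad : ∀ h : Yinf 𝒩,
        ‖F (x + h) - F x - DF x h‖ ≤ C * Real.exp eps * B * ‖h‖ * ‖h‖ := by
      intro h
      apply Yinf.norm_le'
      intro n
      have hseq : (F (x + h) - F x - DF x h).seq n
          = f (n - 1) (x.seq (n - 1) + h.seq (n - 1)) - f (n - 1) (x.seq (n - 1))
            - Df (n - 1) (x.seq (n - 1)) (h.seq (n - 1)) := by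
        rw [Yinf.seq_sub, Yinf.seq_sub, hFseq, hFseq, hDFseq, Yinf.seq_add, map_add]
        abel
      rw [hseq]
      have htay := aux_taylor (f (n - 1)) (Df (n - 1)) (hf_diff (n - 1))
        (L := B * Real.exp (-eps * |((n - 1 : ℤ) : ℝ)|)) (by positivity)
        (hDf_lip (n - 1)) (x.seq (n - 1)) (h.seq (n - 1))
      have hb : ‖f (n - 1) (x.seq (n - 1) + h.seq (n - 1)) - f (n - 1) (x.seq (n - 1))
          - Df (n - 1) (x.seq (n - 1)) (h.seq (n - 1))‖
          ≤ B * ‖h‖ * ‖h‖ * Real.exp (-eps * |((n - 1 : ℤ) : ℝ)|) := by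
        refine htay.trans ?_
        have hm := seqnorm h (n - 1)
        calc B * Real.exp (-eps * |((n - 1 : ℤ) : ℝ)|) * ‖h.seq (n - 1)‖ * ‖h.seq (n - 1)‖
            ≤ B * Real.exp (-eps * |((n - 1 : ℤ) : ℝ)|) * ‖h‖ * ‖h‖ := by gcongr
          _ = B * ‖h‖ * ‖h‖ * Real.exp (-eps * |((n - 1 : ℤ) : ℝ)|) := by ring
      refine (comp n _ (B * ‖h‖ * ‖h‖) (by positivity) hb).trans (le_of_eq ?_)
      ring
    have hKpos : (0 : ℝ) < C * Real.exp eps * B := by positivity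
    filter_upwards [Metric.ball_mem_nhds (0 : Yinf 𝒩)
      (show (0 : ℝ) < c / (C * Real.exp eps * B) by positivity)] with h hh
    rw [Metric.mem_ball, dist_zero_right] at hh
    calc ‖F (x + h) - F x - DF x h‖ ≤ C * Real.exp eps * B * ‖h‖ * ‖h‖ := hquad h
      _ ≤ C * Real.exp eps * B * (c / (C * Real.exp eps * B)) * ‖h‖ := by gcongr
      _ = c * ‖h‖ := by field_simp
  -- Lipschitz bound on DF
  · intro x y
    apply ContinuousLinearMap.opNorm_le_bound _ (by positivity)
    intro ξ
    apply Yinf.norm_le'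
    intro n
    have hseq : ((DF x - DF y) ξ).seq n
        = Df (n - 1) (x.seq (n - 1)) (ξ.seq (n - 1))
          - Df (n - 1) (y.seq (n - 1)) (ξ.seq (n - 1)) := by
      rw [ContinuousLinearMap.sub_apply, Yinf.seq_sub, hDFseq, hDFseq]
      abel
    rw [hseq]
    have hb : ‖Df (n - 1) (x.seq (n - 1)) (ξ.seq (n - 1))
        - Df (n - 1) (y.seq (n - 1)) (ξ.seq (n - 1))‖
        ≤ B * ‖x - y‖ * ‖ξ‖ * Real.exp (-eps * |((n - 1 : ℤ) : ℝ)|) := by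
      have hxy : ‖x.seq (n - 1) - y.seq (n - 1)‖ ≤ ‖x - y‖ := by
        have := seqnorm (x - y) (n - 1)
        rwa [Yinf.seq_sub] at this
      calc ‖Df (n - 1) (x.seq (n - 1)) (ξ.seq (n - 1))
            - Df (n - 1) (y.seq (n - 1)) (ξ.seq (n - 1))‖
          = ‖(Df (n - 1) (x.seq (n - 1)) - Df (n - 1) (y.seq (n - 1))) (ξ.seq (n - 1))‖ := by
            rw [ContinuousLinearMap.sub_apply]
        _ ≤ ‖Df (n - 1) (x.seq (n - 1)) - Df (n - 1) (y.seq (n - 1))‖ * ‖ξ.seq (n - 1)‖ :=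
            ContinuousLinearMap.le_opNorm _ _
        _ ≤ B * Real.exp (-eps * |((n - 1 : ℤ) : ℝ)|) * ‖x.seq (n - 1) - y.seq (n - 1)‖ * ‖ξ‖ :=
            mul_le_mul (hDf_lip _ _ _) (seqnorm ξ _) (norm_nonneg _) (by positivity)
        _ ≤ B * Real.exp (-eps * |((n - 1 : ℤ) : ℝ)|) * ‖x - y‖ * ‖ξ‖ := by gcongr
        _ = B * ‖x - y‖ * ‖ξ‖ * Real.exp (-eps * |((n - 1 : ℤ) : ℝ)|) := by ring
    refine (comp n _ (B * ‖x - y‖ * ‖ξ‖) (by positivity) hb).trans (le_of_eq ?_)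
    ring
  -- distance from 𝔸
  · intro x
    apply ContinuousLinearMap.opNorm_le_bound _ (by positivity)
    intro ξ
    apply Yinf.norm_le'
    intro n
    have hseq : ((DF x - 𝔸) ξ).seq n
        = Df (n - 1) (x.seq (n - 1)) (ξ.seq (n - 1)) := by
      rw [ContinuousLinearMap.sub_apply, Yinf.seq_sub, hDFseq, h𝔸]
      abel
    rw [hseq]
    refine (hDGn x ξ n).trans (le_of_eq ?_)
    ring
  -- F 0 = 0
  · apply Subtype.ext
    funext n
    show A (n - 1) ((0 : Yinf 𝒩).seq (n - 1)) + f (n - 1) ((0 : Yinf 𝒩).seq (n - 1))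
      = (0 : Yinf 𝒩).seq n
    rw [Yinf.seq_zero, Yinf.seq_zero, map_zero, hf0, add_zero]
  -- DF 0 = 𝔸
  · apply ContinuousLinearMap.ext
    intro ξ
    apply Subtype.ext
    funext n
    have h1 : (DF 0 ξ).seq n = A (n - 1) (ξ.seq (n - 1)) := by
      rw [hDFseq, Yinf.seq_zero, hDf0]
      simp
    have h2 : (𝔸 ξ).seq n = A (n - 1) (ξ.seq (n - 1)) := h𝔸 ξ n
    show (DF 0 ξ).seq n = (𝔸 ξ).seq n
    rw [h1, h2]

end
end

section
/- Let T(t,s) be the evolution family of x' = A(t)x and φ the solution operator of x' = A(t)x + f(t,x); set A_n := T(n+1,n) and f_n(x) := φ(n+1,n;x) − A_n x. Suppose maps h_n : ℝ^d → ℝ^d (n ∈ ℤ) satisfy the conjugacy equations h_{n+1}(A_n x + f_n(x)) = A_n h_n(x) for all n ∈ ℤ and x ∈ ℝ^d. Define H : ℝ × ℝ^d → ℝ^d by H(t,x) := T(t,n)h_n(φ(n,t;x)) for t ∈ [n,n+1) and n ∈ ℤ. Then H(t, φ(t,s;y)) = T(t,s)H(s,y) for all t,s ∈ ℝ and y ∈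 ℝ^d; in particular, for every solution x(·) of x' = A(t)x + f(t,x), the function t ↦ H(t,x(t)) is a solution of x' = A(t)x. -/
open Set

structure IsEvolution {X : Type*} (U : ℝ → ℝ → X → X) : Prop where
  self : ∀ t x, U t t x = x
  comp : ∀ t s r x, U t s (U s r x) = U t r x

theorem isEvolution_coe {E : Type*} [AddCommMonoid E] [Module ℝ E] [TopologicalSpace E]
    {T : ℝ → ℝ → E →L[ℝ] E} (hT_id : ∀ t, T t t = ContinuousLinearMap.id ℝ E)
    (hT_comp : ∀ t s r, (T t s).comp (T s r) = T t r) :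
    IsEvolution fun t s => ⇑(T t s) where
  self t x := by rw [hT_id]; rfl
  comp t s r x := by rw [← hT_comp t s r]; rfl

namespace IsEvolution

variable {X Y : Type*} {U : ℝ → ℝ → X → X} {V : ℝ → ℝ → Y → Y} {h : ℤ → X → Y}

theorem semiconj_int (hU : IsEvolution U) (hV : IsEvolution V)
    (hconj : ∀ (n : ℤ) x, h (n + 1) (U ((n : ℝ) + 1) n x) = V ((n : ℝ) + 1) n (h n x))
    (n m : ℤ) (x : X) : h n (U n m x) = V n m (h m x) := by
  induction n using Int.inductionOn' (b := m) with
  | zero => rw [hU.self, hV.self]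
  | succ k _ ih =>
    push_cast
    rw [← hU.comp _ k, hconj, ih, hV.comp]
  | pred k _ ih =>
    have step := hconj (k - 1) (U (k - 1 : ℤ) m x)
    push_cast at step ⊢
    rw [sub_add_cancel, sub_add_cancel, hU.comp, ih] at step
    rw [← hV.self (k - 1 : ℝ) (h (k - 1) _), ← hV.comp _ k, ← step, hV.comp]

variable {H : ℝ → X → Y}

theorem transport_apply (hU : IsEvolution U) (hV : IsEvolution V)
    (hconj : ∀ (n : ℤ) x, h (n + 1) (U ((n : ℝ) + 1) n x) = V ((n : ℝ) + 1) n (h n x))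
    (hH : ∀ (n : ℤ) t, t ∈ Ico (n : ℝ) ((n : ℝ) + 1) → ∀ x, H t x = V t n (h n (U n t x)))
    (n : ℤ) (t : ℝ) (x : X) : H t x = V t n (h n (U n t x)) := by
  rw [hH ⌊t⌋ t ⟨Int.floor_le t, Int.lt_floor_add_one t⟩, ← hU.comp _ n, hU.semiconj_int hV hconj,
    hV.comp]

theorem transport_semiconj (hU : IsEvolution U) (hV : IsEvolution V)
    (hconj : ∀ (n : ℤ) x, h (n + 1) (U ((n : ℝ) + 1) n x) = V ((n : ℝ) + 1) n (h n x))
    (hH : ∀ (n : ℤ) t, t ∈ Ico (n : ℝ) ((n : ℝ) + 1) → ∀ x, H t x = V t n (h n (U n t x)))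
    (t s : ℝ) (y : X) : H t (U t s y) = V t s (H s y) := by
  rw [hU.transport_apply hV hconj hH 0, hU.transport_apply hV hconj hH 0 s, hU.comp, hV.comp]

end IsEvolution

theorem conjugacy_transport_general (d : ℕ)
    -- the linear equation x' = A(t)x and its evolution family T(t,s)
    (A : ℝ → Ed d →L[ℝ] Ed d) (T : ℝ → ℝ → Ed d →L[ℝ] Ed d)
    (hT_id : ∀ t, T t t = ContinuousLinearMap.id ℝ (Ed d))
    (hT_comp : ∀ t s r, (T t s).comp (T s r) = T t r)
    (hT_deriv : ∀ s x t, HasDerivAt (fun τ => T τ s x) (A t (T t s x)) t)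
    -- the nonlinear perturbation f and the solution operator φ of x' = A(t)x + f(t,x)
    (f : ℝ → Ed d → Ed d)
    (φ : ℝ → ℝ → Ed d → Ed d)
    (hφ_init : ∀ t₀ x, φ t₀ t₀ x = x)
    (hφ_cocycle : ∀ t r s x, φ t r (φ r s x) = φ t s x)
    -- uniqueness of solutions: every solution is given by φ
    (huniq : ∀ x : ℝ → Ed d, (∀ τ, HasDerivAt x (A τ (x τ) + f τ (x τ)) τ) →
      ∀ t s : ℝ, x t = φ t s (x s))
    -- the maps h_n and the conjugacy equations
    -- h_{n+1}(A_n x + f_n(x)) = A_n h_n(x), where A_n x + f_n(x) = φ(n+1,n;x)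
    (h : ℤ → Ed d → Ed d)
    (hconj : ∀ (n : ℤ) (x : Ed d),
      h (n + 1) (φ ((n : ℝ) + 1) (n : ℝ) x) = T ((n : ℝ) + 1) (n : ℝ) (h n x))
    -- the map H(t,x) = T(t,n) h_n(φ(n,t;x)) for t ∈ [n, n+1)
    (H : ℝ → Ed d → Ed d)
    (hH : ∀ (n : ℤ) (t : ℝ), t ∈ Set.Ico (n : ℝ) ((n : ℝ) + 1) →
      ∀ x : Ed d, H t x = T t (n : ℝ) (h n (φ (n : ℝ) t x))) :
    -- then H(t, φ(t,s;y)) = T(t,s) H(s,y) for all t, s, y, ...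
    (∀ (t s : ℝ) (y : Ed d), H t (φ t s y) = T t s (H s y)) ∧
    -- ... and in particular H maps solutions of the nonlinear equation
    -- to solutions of the linear one
    (∀ x : ℝ → Ed d, (∀ τ, HasDerivAt x (A τ (x τ) + f τ (x τ)) τ) →
      ∀ t, HasDerivAt (fun τ => H τ (x τ)) (A t (H t (x t))) t) := by
  have hφ : IsEvolution φ := ⟨hφ_init, hφ_cocycle⟩
  have hH_semiconj := hφ.transport_semiconj (isEvolution_coe hT_id hT_comp) hconj hH
  refine ⟨hH_semiconj, fun x hx t => ?_⟩
  have hlinear : (fun τ => H τ (x τ)) = fun τ => T τ t (H t (x t)) :=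
    funext fun τ => by rw [huniq x hx τ t, hH_semiconj]
  rw [hlinear]
  simpa [hT_id] using hT_deriv t (H t (x t)) t

theorem conjugacy_transport (d : ℕ)
    -- the linear equation x' = A(t)x and its evolution family T(t,s)
    (A : ℝ → Ed d →L[ℝ] Ed d) (T : ℝ → ℝ → Ed d →L[ℝ] Ed d)
    (hT_id : ∀ t, T t t = ContinuousLinearMap.id ℝ (Ed d))
    (hT_comp : ∀ t s r, (T t s).comp (T s r) = T t r)
    (hT_deriv : ∀ s x t, HasDerivAt (fun τ => T τ s x) (A t (T t s x)) t)
    -- the nonlinear perturbation f and the solution operator φ of x' = A(t)x + f(t,x)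
    (f : ℝ → Ed d → Ed d)
    (hf_cont : Continuous (fun p : ℝ × Ed d => f p.1 p.2))
    (φ : ℝ → ℝ → Ed d → Ed d)
    (hφ_init : ∀ t₀ x, φ t₀ t₀ x = x)
    (hφ_sol : ∀ t₀ x t, HasDerivAt (fun τ => φ τ t₀ x) (A t (φ t t₀ x) + f t (φ t t₀ x)) t)
    (hφ_cocycle : ∀ t r s x, φ t r (φ r s x) = φ t s x)
    -- uniqueness of solutions: every solution is given by φ
    (huniq : ∀ x : ℝ → Ed d, (∀ τ, HasDerivAt x (A τ (x τ) + f τ (x τ)) τ) →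
      ∀ t s : ℝ, x t = φ t s (x s))
    -- the maps h_n and the conjugacy equations
    -- h_{n+1}(A_n x + f_n(x)) = A_n h_n(x), where A_n x + f_n(x) = φ(n+1,n;x)
    (h : ℤ → Ed d → Ed d)
    (hconj : ∀ (n : ℤ) (x : Ed d),
      h (n + 1) (φ ((n : ℝ) + 1) (n : ℝ) x) = T ((n : ℝ) + 1) (n : ℝ) (h n x))
    -- the map H(t,x) = T(t,n) h_n(φ(n,t;x)) for t ∈ [n, n+1)
    (H : ℝ → Ed d → Ed d)
    (hH : ∀ (n : ℤ) (t : ℝ), t ∈ Set.Ico (n : ℝ) ((n : ℝ) + 1) →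
      ∀ x : Ed d, H t x = T t (n : ℝ) (h n (φ (n : ℝ) t x))) :
    -- then H(t, φ(t,s;y)) = T(t,s) H(s,y) for all t, s, y, ...
    (∀ (t s : ℝ) (y : Ed d), H t (φ t s y) = T t s (H s y)) ∧
    -- ... and in particular H maps solutions of the nonlinear equation
    -- to solutions of the linear one
    (∀ x : ℝ → Ed d, (∀ τ, HasDerivAt x (A τ (x τ) + f τ (x τ)) τ) →
      ∀ t, HasDerivAt (fun τ => H τ (x τ)) (A t (H t (x t))) t) :=
  conjugacy_transport_general d A T hT_id hT_comp hT_deriv f φ hφ_init hφ_cocycle huniq h hconj H hH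
end

section
/- Let A be a real d×d matrix and let φ(t,0;x) denote the globally defined flow of x' = Ax + f(x), where f : ℝ^d → ℝ^d is continuous and such that solutions are globally defined and unique (so that φ(t+s,0;x) = φ(t,0;φ(s,0;x)) for all t,s,x). Suppose h : ℝ^d → ℝ^d is continuous and conjugates the time-one map to the linear time-one map: h(φ(1,0;x)) = e^{A}h(x) for all x ∈ ℝ^d. Define H̃(x) := ∫_0^1 e^{As} h(φ(−s,0;x)) ds. Then e^{At}H̃(x) = H̃(φ(t,0;x)) for all t ∈ ℝ and x ∈ ℝ^d; that is, H̃ intertwines the nonlinear flow with the linear flow e^{At}. -/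
noncomputable section

/-- The continuous linear operator on `ℝ^d` induced by a matrix. -/
def matCLM {d : ℕ} (A : Matrix (Fin d) (Fin d) ℝ) : Ed d →L[ℝ] Ed d :=
  LinearMap.toContinuousLinearMap A.mulVecLin

/-!
Put `γ s := h (φ (-s) x)`. The conjugacy `h ∘ φ 1 = e^A ∘ h` says `e^A γ (s + 1) = γ s`, so the
twisted curve `s ↦ e^{sA} γ s` is `1`-periodic, and its integral over any interval of length one
is the same. Moving the flow by `t` shifts `γ` by `t`, and pulling `e^{tA}` out of the integral
shifts the window of integration by `t`.
-/

open NormedSpace Function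

section

variable {E : Type*} [NormedAddCommGroup E] [NormedSpace ℝ E] [CompleteSpace E] (L : E →L[ℝ] E)

/-- The paper's `H̃ x`, for the curve `γ s = h (φ (-s) x)`. -/
def twistedAverage (γ : ℝ → E) : E :=
  ∫ s in (0 : ℝ)..1, exp (s • L) (γ s)

theorem exp_add_smul_apply (s t : ℝ) (v : E) :
    exp ((s + t) • L) v = exp (s • L) (exp (t • L) v) := by
  -- the `exp` API asks for a `ℚ`-algebra, which `E →L[ℝ] E` is only by restricting scalars
  let : NormedAlgebra ℚ (E →L[ℝ] E) := .restrictScalars ℚ ℝ _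
  rw [add_smul, exp_add_of_commute ((Commute.refl L).smul_left s |>.smul_right t),
    mul_apply_eq_comp]

theorem continuous_exp_smul : Continuous fun s : ℝ => exp (s • L) := by
  let : NormedAlgebra ℚ (E →L[ℝ] E) := .restrictScalars ℚ ℝ _
  exact exp_continuous.comp (continuous_id.smul continuous_const)

theorem periodic_exp_smul_apply {γ : ℝ → E} (hγ : ∀ s, exp L (γ (s + 1)) = γ s) :
    Periodic (fun s => exp (s • L) (γ s)) 1 := fun s => by
  dsimp only
  rw [exp_add_smul_apply, one_smul, hγ]

theorem exp_smul_twistedAverage {γ : ℝ → E} (hγc : Continuous γ)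
    (hγ : ∀ s, exp L (γ (s + 1)) = γ s) (t : ℝ) :
    exp (t • L) (twistedAverage L γ) = twistedAverage L fun s => γ (s - t) := by
  set g : ℝ → E := fun s => exp (s • L) (γ s)
  have hg : Continuous g := (continuous_exp_smul L).clm_apply hγc
  calc exp (t • L) (∫ s in (0 : ℝ)..1, g s)
      = exp (t • L) (∫ s in (0 : ℝ)..1, g (s - t)) := by
        rw [intervalIntegral.integral_comp_sub_right, zero_sub, ← neg_add_eq_sub,
          (periodic_exp_smul_apply L hγ).intervalIntegral_add_eq (-t) 0, zero_add]
    _ = ∫ s in (0 : ℝ)..1, exp (t • L) (g (s - t)) :=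
        (ContinuousLinearMap.intervalIntegral_comp_comm _
          ((hg.comp (continuous_sub_right t)).intervalIntegrable 0 1)).symm
    _ = ∫ s in (0 : ℝ)..1, exp (s • L) (γ (s - t)) := by
        simp only [g, ← exp_add_smul_apply, add_sub_cancel]

end

theorem averaged_conjugacy_intertwines_flows_general (d : ℕ)
    (A : Matrix (Fin d) (Fin d) ℝ)
    (φ : ℝ → Ed d → Ed d)
    (hφ_cont : ∀ x, Continuous fun t => φ t x)
    (hφ_flow : ∀ t s x, φ (t + s) x = φ t (φ s x))
    -- h is continuous and conjugates the time-one maps: h(φ(1,0;x)) = e^A h(x)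
    (h : Ed d → Ed d) (hh_cont : Continuous h)
    (hconj : ∀ x, h (φ 1 x) = NormedSpace.exp (matCLM A) (h x)) :
    -- then H̃(x) := ∫_0^1 e^{As} h(φ(−s,0;x)) ds satisfies
    -- e^{At} H̃(x) = H̃(φ(t,0;x)) for all t ∈ ℝ and x ∈ ℝ^d
    ∀ (t : ℝ) (x : Ed d),
      NormedSpace.exp (t • matCLM A)
          (∫ s in (0 : ℝ)..1, NormedSpace.exp (s • matCLM A) (h (φ (-s) x))) =
        ∫ s in (0 : ℝ)..1, NormedSpace.exp (s • matCLM A) (h (φ (-s) (φ t x))) := by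
  intro t x
  have hγ (s : ℝ) : exp (matCLM A) (h (φ (-(s + 1)) x)) = h (φ (-s) x) := by
    rw [← hconj, ← hφ_flow]
    ring_nf
  have hshift (s : ℝ) : φ (-s) (φ t x) = φ (-(s - t)) x := by
    rw [← hφ_flow]
    ring_nf
  simp only [hshift]
  exact exp_smul_twistedAverage (matCLM A) (hh_cont.comp ((hφ_cont x).comp continuous_neg)) hγ t

theorem averaged_conjugacy_intertwines_flows (d : ℕ)
    (A : Matrix (Fin d) (Fin d) ℝ)
    -- the globally defined flow φ(t,0;x) of x' = Ax + f(x)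
    (f : Ed d → Ed d) (hf_cont : Continuous f)
    (φ : ℝ → Ed d → Ed d)
    (hφ0 : ∀ x, φ 0 x = x)
    (hφ_sol : ∀ t x, HasDerivAt (fun s => φ s x) (matCLM A (φ t x) + f (φ t x)) t)
    (hφ_cont : ∀ x, Continuous fun t => φ t x)
    (hφ_flow : ∀ t s x, φ (t + s) x = φ t (φ s x))
    -- h is continuous and conjugates the time-one maps: h(φ(1,0;x)) = e^A h(x)
    (h : Ed d → Ed d) (hh_cont : Continuous h)
    (hconj : ∀ x, h (φ 1 x) = NormedSpace.exp (matCLM A) (h x)) :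
    -- then H̃(x) := ∫_0^1 e^{As} h(φ(−s,0;x)) ds satisfies
    -- e^{At} H̃(x) = H̃(φ(t,0;x)) for all t ∈ ℝ and x ∈ ℝ^d
    ∀ (t : ℝ) (x : Ed d),
      NormedSpace.exp (t • matCLM A)
          (∫ s in (0 : ℝ)..1, NormedSpace.exp (s • matCLM A) (h (φ (-s) x))) =
        ∫ s in (0 : ℝ)..1, NormedSpace.exp (s • matCLM A) (h (φ (-s) (φ t x))) :=
  averaged_conjugacy_intertwines_flows_general d A φ hφ_cont hφ_flow h hh_cont hconj

end
end
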